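/- arXiv:2405.17930 — 7 statements merged into one kernel-verified Lean document; each statement's English description precedes it below -/
import Mathlib

section
/- Let K be an algebraically closed field of characteristic zero, d ≥ 1, A = K⟨v1,…,vd⟩ the free associative K-algebra, and let Λ = (λ_ij) and M = (μ_ij) be d×d matrices over K with Λ symmetric (λ_ij = λ_ji) and M skew-symmetric (μ_ij = −μ_ji, μ_ii = 0). Suppose ⟪-,-⟫ : A⊗A → A⊗A is a K-linear map satisfying the Leibniz rules such that ⟪v_i,v_j⟫ + ⟪v_j,v_i⟫° = λ_ij(v_i⊗v_j − v_j⊗v_i) + μ_ij·(1⊗(v_i v_j)) + μ_ji·((v_j v_i)⊗1) for all 1≤i,j≤d (a mixed double algebra of type (Λ,M)). If λ_ij − λ_kl = μ_il − μ_kj for all 1≤i,j,k,l≤d, then {a,b} + {b,a} ∈ [A,A] for all a,b ∈ A. -/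
open TensorProduct

noncomputable section

variable (K : Type*) [Field K]
variable (A : Type*) [Ring A] [Algebra K A]

/-- Leibniz rules for a double-bracket-type operation. -/
def LeibnizRules (D : A ⊗[K] A →ₗ[K] A ⊗[K] A) : Prop :=
  (∀ a b c : A,
      D (a ⊗ₜ[K] (b * c)) =
        (b ⊗ₜ[K] (1 : A)) * D (a ⊗ₜ[K] c) + D (a ⊗ₜ[K] b) * ((1 : A) ⊗ₜ[K] c))
  ∧ (∀ a b c : A,
      D ((a * b) ⊗ₜ[K] c) =
        ((1 : A) ⊗ₜ[K] a) * D (b ⊗ₜ[K] c) + D (a ⊗ₜ[K] c) * (b ⊗ₜ[K] (1 : A)))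

/-- The associated bracket `{a,b} = m(⟪a,b⟫)`. -/
def br (D : A ⊗[K] A →ₗ[K] A ⊗[K] A) (a b : A) : A :=
  LinearMap.mul' K A (D (a ⊗ₜ[K] b))

/-- The K-span of commutators `[A,A]`. -/
def commutatorSpan : Submodule K A :=
  Submodule.span K {x : A | ∃ a b : A, x = a * b - b * a}

/-- The flip on `A ⊗ A`. -/
def flipT : A ⊗[K] A →ₗ[K] A ⊗[K] A := (TensorProduct.comm K A A).toLinearMap

/-- Swap of the last two tensor factors of `(A ⊗ A) ⊗ A`. -/
def swap23 : ((A ⊗[K] A) ⊗[K] A) →ₗ[K] ((A ⊗[K] A) ⊗[K] A) :=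
  (TensorProduct.assoc K A A A).symm.toLinearMap ∘ₗ
    (LinearMap.lTensor A (TensorProduct.comm K A A).toLinearMap) ∘ₗ
    (TensorProduct.assoc K A A A).toLinearMap

/-- `⟪a, -⟫_L` on double tensors: `b ⊗ c ↦ ⟪a,b⟫ ⊗ c`. -/
def dL (D : A ⊗[K] A →ₗ[K] A ⊗[K] A) (a : A) :
    A ⊗[K] A →ₗ[K] (A ⊗[K] A) ⊗[K] A :=
  LinearMap.rTensor A (D ∘ₗ TensorProduct.mk K A A a)

/-- `⟪a, -⟫_R` on double tensors: `b ⊗ c ↦ b ⊗ ⟪a,c⟫`. -/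
def dR (D : A ⊗[K] A →ₗ[K] A ⊗[K] A) (a : A) :
    A ⊗[K] A →ₗ[K] (A ⊗[K] A) ⊗[K] A :=
  (TensorProduct.assoc K A A A).symm.toLinearMap ∘ₗ
    LinearMap.lTensor A (D ∘ₗ TensorProduct.mk K A A a)

/-- `⟪-, c⟫_L` on double tensors: `b ⊗ b' ↦ ⟪b,c⟫' ⊗ b' ⊗ ⟪b,c⟫''`. -/
def dLfst (D : A ⊗[K] A →ₗ[K] A ⊗[K] A) (c : A) :
    A ⊗[K] A →ₗ[K] (A ⊗[K] A) ⊗[K] A :=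
  swap23 K A ∘ₗ LinearMap.rTensor A (D ∘ₗ (TensorProduct.mk K A A).flip c)

/-- The double Jacobiator. -/
def DJac (D : A ⊗[K] A →ₗ[K] A ⊗[K] A) (a b c : A) : (A ⊗[K] A) ⊗[K] A :=
  dL K A D a (D (b ⊗ₜ[K] c)) - dR K A D b (D (a ⊗ₜ[K] c)) - dLfst K A D c (D (a ⊗ₜ[K] b))

/-- `c ⊗₁ (-)` : `w' ⊗ w'' ↦ w' ⊗ c ⊗ w''`. -/
def otimes1 (c : A) : A ⊗[K] A →ₗ[K] (A ⊗[K] A) ⊗[K] A :=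
  LinearMap.rTensor A ((TensorProduct.mk K A A).flip c)

variable {ι : Type*}

/-- Mixed double algebra structure of weight `lam` with respect to the generators `v`. -/
def IsMixedDouble (v : ι → A) (lam : ι → K) (D : A ⊗[K] A →ₗ[K] A ⊗[K] A) : Prop :=
  LeibnizRules K A D ∧
  ∀ i j : ι,
    D (v i ⊗ₜ[K] v j) + flipT K A (D (v j ⊗ₜ[K] v i)) =
      ((lam i + lam j) / 2) • (v i ⊗ₜ[K] v j - v j ⊗ₜ[K] v i) +
      ((lam i - lam j) / 2) • ((1 : A) ⊗ₜ[K] (v i * v j) - (v j * v i) ⊗ₜ[K] (1 : A))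

/-- Mixed double Poisson algebra structure of weight `lam` w.r.t. the generators `v`. -/
def IsMixedDoublePoisson (v : ι → A) (lam : ι → K) (D : A ⊗[K] A →ₗ[K] A ⊗[K] A) : Prop :=
  IsMixedDouble K A v lam D ∧
  ∀ i j k : ι,
    DJac K A D (v i) (v j) (v k) =
      (-((lam i + lam j) / 2)) • otimes1 K A (v j) (D (v i ⊗ₜ[K] v k)) +
      ((lam i - lam j) / 2) •
        otimes1 K A (1 : A) (((1 : A) ⊗ₜ[K] v j) * D (v i ⊗ₜ[K] v k))

/-- Modified double Poisson bracket. -/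
def IsModifiedDoublePoisson (D : A ⊗[K] A →ₗ[K] A ⊗[K] A) : Prop :=
  LeibnizRules K A D ∧
  (∀ a b : A, br K A D a b + br K A D b a ∈ commutatorSpan K A) ∧
  (∀ a b c : A,
    br K A D a (br K A D b c) - br K A D b (br K A D a c) - br K A D (br K A D a b) c = 0)

end


namespace St3
open TensorProduct

noncomputable section
variable (K : Type*) [Field K]
variable (A : Type*) [Ring A] [Algebra K A]

noncomputable def tr : A →ₗ[K] A ⧸ commutatorSpan K A := (commutatorSpan K A).mkQ

variable {K A}

lemma trC (x y : A) : tr K A (x * y) = tr K A (y * x) := by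
  show Submodule.Quotient.mk _ = Submodule.Quotient.mk _
  rw [Submodule.Quotient.eq]
  exact Submodule.subset_span ⟨x, y, rfl⟩

lemma tr_rot (a b c d : A) : tr K A (a * (b * (c * d))) = tr K A (b * (c * (d * a))) := by
  rw [trC]; simp only [mul_assoc]

def th (u : A ⊗[K] A) (z m : A) : A ⧸ commutatorSpan K A :=
  tr K A (LinearMap.mul' K A (((1:A) ⊗ₜ[K] z) * u * ((1:A) ⊗ₜ[K] m)))

lemma th_tmul (p q z m : A) : th (p ⊗ₜ[K] q) z m = tr K A (p * (z * (q * m))) := by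
  simp [th, Algebra.TensorProduct.tmul_mul_tmul, mul_assoc]

lemma th_zero (z m : A) : th (0 : A ⊗[K] A) z m = 0 := by simp [th]

lemma th_add (u v : A ⊗[K] A) (z m : A) : th (u + v) z m = th u z m + th v z m := by
  simp [th, mul_add, add_mul]

lemma th_smul (r : K) (u : A ⊗[K] A) (z m : A) : th (r • u) z m = r • th u z m := by
  simp [th, mul_smul_comm, smul_mul_assoc]

lemma th_sub (u v : A ⊗[K] A) (z m : A) : th (u - v) z m = th u z m - th v z m := by
  simp [th, mul_sub, sub_mul]

lemma th_add_m (u : A ⊗[K] A) (z m m' : A) : th u z (m + m') = th u z m + th u z m' := by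
  simp [th, TensorProduct.tmul_add, mul_add]

lemma th_smul_m (u : A ⊗[K] A) (z : A) (r : K) (m : A) : th u z (r • m) = r • th u z m := by
  simp [th, TensorProduct.tmul_smul, mul_smul_comm]

lemma th_shift_l1 (x : A) (u : A ⊗[K] A) (z w : A) :
    th ((x ⊗ₜ[K] (1:A)) * u) z w = th u z (w * x) := by
  induction u using TensorProduct.induction_on with
  | zero => simp [th_zero]
  | tmul p q =>
    rw [Algebra.TensorProduct.tmul_mul_tmul, one_mul, th_tmul, th_tmul, mul_assoc x p,
      tr_rot x p z (q*w)]
    simp only [mul_assoc]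
  | add u v hu hv => rw [mul_add, th_add, th_add, hu, hv]

lemma th_shift_l2 (x : A) (u : A ⊗[K] A) (z w : A) :
    th (((1:A) ⊗ₜ[K] x) * u) z w = th u (z * x) w := by
  induction u using TensorProduct.induction_on with
  | zero => simp [th_zero]
  | tmul p q =>
    rw [Algebra.TensorProduct.tmul_mul_tmul, one_mul, th_tmul, th_tmul]
    simp only [mul_assoc]
  | add u v hu hv => rw [mul_add, th_add, th_add, hu, hv]

lemma th_shift_r1 (x : A) (u : A ⊗[K] A) (z w : A) :
    th (u * (x ⊗ₜ[K] (1:A))) z w = th u (x * z) w := by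
  induction u using TensorProduct.induction_on with
  | zero => simp [th_zero]
  | tmul p q =>
    rw [Algebra.TensorProduct.tmul_mul_tmul, mul_one, th_tmul, th_tmul]
    simp only [mul_assoc]
  | add u v hu hv => rw [add_mul, th_add, th_add, hu, hv]

lemma th_shift_r2 (x : A) (u : A ⊗[K] A) (z w : A) :
    th (u * ((1:A) ⊗ₜ[K] x)) z w = th u z (x * w) := by
  induction u using TensorProduct.induction_on with
  | zero => simp [th_zero]
  | tmul p q =>
    rw [Algebra.TensorProduct.tmul_mul_tmul, mul_one, th_tmul, th_tmul]
    simp only [mul_assoc]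
  | add u v hu hv => rw [add_mul, th_add, th_add, hu, hv]

lemma flipT_tmul (p q : A) : flipT K A (p ⊗ₜ[K] q) = q ⊗ₜ[K] p := rfl

lemma flipT_mul (u v : A ⊗[K] A) : flipT K A (u * v) = flipT K A u * flipT K A v := by
  induction u using TensorProduct.induction_on with
  | zero => simp
  | tmul p q =>
    induction v using TensorProduct.induction_on with
    | zero => simp
    | tmul r s => simp [Algebra.TensorProduct.tmul_mul_tmul, flipT_tmul]
    | add v w hv hw => simp only [mul_add, map_add, hv, hw]
  | add u u' hu hu' => simp only [add_mul, map_add, hu, hu']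


section DPart
open TensorProduct
variable {K : Type*} [Field K] {A : Type*} [Ring A] [Algebra K A]
variable (D : A ⊗[K] A →ₗ[K] A ⊗[K] A)

def Fm (a b : A) : A ⊗[K] A := D (a ⊗ₜ[K] b) + flipT K A (D (b ⊗ₜ[K] a))

variable {D}

lemma one_tmul_one : ((1:A) ⊗ₜ[K] (1:A)) = (1 : A ⊗[K] A) := rfl

lemma D_one_left (hL : LeibnizRules K A D) (b : A) : D ((1:A) ⊗ₜ[K] b) = 0 := by
  have h := hL.2 1 1 b
  rw [one_mul, one_tmul_one, one_mul, mul_one] at h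
  exact (left_eq_add.mp h)

lemma D_one_right (hL : LeibnizRules K A D) (a : A) : D (a ⊗ₜ[K] (1:A)) = 0 := by
  have h := hL.1 a 1 1
  rw [one_mul, one_tmul_one, one_mul, mul_one] at h
  exact (left_eq_add.mp h)

lemma FmR2 (hL : LeibnizRules K A D) (a b c : A) :
    Fm D a (b*c) = (b ⊗ₜ[K] (1:A)) * Fm D a c + Fm D a b * ((1:A) ⊗ₜ[K] c) := by
  unfold Fm
  rw [hL.1 a b c, hL.2 b c a, map_add, flipT_mul, flipT_mul, flipT_tmul, flipT_tmul]
  noncomm_ring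

lemma FmR1 (hL : LeibnizRules K A D) (a b c : A) :
    Fm D (a*b) c = ((1:A) ⊗ₜ[K] a) * Fm D b c + Fm D a c * (b ⊗ₜ[K] (1:A)) := by
  unfold Fm
  rw [hL.2 a b c, hL.1 c a b, map_add, flipT_mul, flipT_mul, flipT_tmul, flipT_tmul]
  noncomm_ring

end DPart
section GPart
open TensorProduct
variable {K : Type*} [Field K] {d : ℕ}

local notation "FA" => FreeAlgebra K (Fin d)

noncomputable def phi (l : Fin d → K) : FA →ₐ[K] Matrix (Fin 2) (Fin 2) (FA ⊗[K] FA) :=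
  FreeAlgebra.lift K fun i =>
    !![(1:FA) ⊗ₜ[K] FreeAlgebra.ι K i,
       l i • (FreeAlgebra.ι K i ⊗ₜ[K] (1:FA) + (1:FA) ⊗ₜ[K] FreeAlgebra.ι K i);
       0, FreeAlgebra.ι K i ⊗ₜ[K] (1:FA)]

noncomputable def Gm (l : Fin d → K) (a : FA) : FA ⊗[K] FA := phi l a 0 1

lemma phi_entries (l : Fin d → K) (a : FA) :
    phi l a 0 0 = (1:FA) ⊗ₜ[K] a ∧ phi l a 1 1 = a ⊗ₜ[K] (1:FA) ∧ phi l a 1 0 = 0 := by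
  induction a using FreeAlgebra.induction with
  | grade0 r =>
    rw [AlgHom.commutes]
    refine ⟨?_, ?_, ?_⟩ <;>
      simp [Matrix.algebraMap_matrix_apply, Algebra.TensorProduct.algebraMap_apply,
        Algebra.algebraMap_eq_smul_one, TensorProduct.tmul_smul, ← TensorProduct.smul_tmul',
        one_tmul_one]
  | grade1 i =>
    rw [phi, FreeAlgebra.lift_ι_apply]
    refine ⟨?_, ?_, ?_⟩ <;> simp
  | mul a b ha hb =>
    obtain ⟨ha1, ha2, ha3⟩ := ha
    obtain ⟨hb1, hb2, hb3⟩ := hb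
    rw [map_mul]
    refine ⟨?_, ?_, ?_⟩ <;>
      simp [Matrix.mul_apply, Fin.sum_univ_two, ha1, ha2, ha3, hb1, hb2, hb3,
        Algebra.TensorProduct.tmul_mul_tmul]
  | add a b ha hb =>
    obtain ⟨ha1, ha2, ha3⟩ := ha
    obtain ⟨hb1, hb2, hb3⟩ := hb
    rw [map_add]
    refine ⟨?_, ?_, ?_⟩ <;>
      simp [Matrix.add_apply, ha1, ha2, ha3, hb1, hb2, hb3, TensorProduct.tmul_add,
        TensorProduct.add_tmul]

lemma Gm_mul (l : Fin d → K) (a b : FA) :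
    Gm l (a*b) = ((1:FA) ⊗ₜ[K] a) * Gm l b + Gm l a * (b ⊗ₜ[K] (1:FA)) := by
  have ha := phi_entries l a
  have hb := phi_entries l b
  rw [Gm, map_mul]
  simp [Matrix.mul_apply, Fin.sum_univ_two, ha.1, hb.2.1, Gm]

lemma Gm_add (l : Fin d → K) (a b : FA) : Gm l (a+b) = Gm l a + Gm l b := by
  simp [Gm, map_add, Matrix.add_apply]

lemma Gm_algebraMap (l : Fin d → K) (r : K) : Gm l (algebraMap K FA r) = 0 := by
  rw [Gm, AlgHom.commutes]
  simp [Matrix.algebraMap_matrix_apply]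

lemma Gm_ι (l : Fin d → K) (i : Fin d) :
    Gm l (FreeAlgebra.ι K i) =
      l i • (FreeAlgebra.ι K i ⊗ₜ[K] (1:FA) + (1:FA) ⊗ₜ[K] FreeAlgebra.ι K i) := by
  rw [Gm, phi, FreeAlgebra.lift_ι_apply]
  simp

end GPart
section Master
open TensorProduct
variable {K : Type*} [Field K] {d : ℕ}

local notation "FA" => FreeAlgebra K (Fin d)
local notation "v" => FreeAlgebra.ι K

lemma Fm_algebraMap_left (D : FA ⊗[K] FA →ₗ[K] FA ⊗[K] FA) (hL : LeibnizRules K (FreeAlgebra K (Fin d)) D)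
    (r : K) (b : FA) : Fm D (algebraMap K FA r) b = 0 := by
  unfold Fm
  simp only [Algebra.algebraMap_eq_smul_one, ← TensorProduct.smul_tmul',
    TensorProduct.tmul_smul, map_smul, D_one_left hL, D_one_right hL, smul_zero,
    map_zero, add_zero]

lemma Fm_algebraMap_right (D : FA ⊗[K] FA →ₗ[K] FA ⊗[K] FA) (hL : LeibnizRules K (FreeAlgebra K (Fin d)) D)
    (r : K) (b : FA) : Fm D b (algebraMap K FA r) = 0 := by
  unfold Fm
  simp only [Algebra.algebraMap_eq_smul_one, ← TensorProduct.smul_tmul',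
    TensorProduct.tmul_smul, map_smul, D_one_left hL, D_one_right hL, smul_zero,
    map_zero, add_zero, zero_add]

lemma algebraMap_mul_eq (r : K) (z : FA) : algebraMap K FA r * z = r • z := by
  rw [Algebra.smul_def]

lemma mul_algebraMap_eq (r : K) (z : FA) : z * algebraMap K FA r = r • z := by
  rw [← Algebra.commutes, Algebra.smul_def]

lemma Fm_add_right (D : FA ⊗[K] FA →ₗ[K] FA ⊗[K] FA) (a b b' : FA) :
    Fm D a (b + b') = Fm D a b + Fm D a b' := by
  unfold Fm
  rw [TensorProduct.tmul_add, TensorProduct.add_tmul, map_add, map_add, map_add]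
  abel

lemma Fm_add_left (D : FA ⊗[K] FA →ₗ[K] FA ⊗[K] FA) (a a' b : FA) :
    Fm D (a + a') b = Fm D a b + Fm D a' b := by
  unfold Fm
  rw [TensorProduct.tmul_add, TensorProduct.add_tmul, map_add, map_add, map_add]
  abel

theorem master (D : FA ⊗[K] FA →ₗ[K] FA ⊗[K] FA) (hL : LeibnizRules K (FreeAlgebra K (Fin d)) D) (l : Fin d → K)
    (hbase : ∀ i j : Fin d, ∀ z w : FA,
      th (Fm D (v i) (v j)) z w =
        th (Gm l (v i)) z (v j * w) - th (Gm l (v i)) z (w * v j)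
        + th (Gm l (v j)) w (v i * z) - th (Gm l (v j)) w (z * v i)) :
    ∀ a b z w : FA,
      th (Fm D a b) z w =
        th (Gm l a) z (b * w) - th (Gm l a) z (w * b)
        + th (Gm l b) w (a * z) - th (Gm l b) w (z * a) := by
  intro a
  induction a using FreeAlgebra.induction with
  | grade0 r =>
    intro b z w
    rw [Fm_algebraMap_left D hL, th_zero, Gm_algebraMap, th_zero, th_zero,
      algebraMap_mul_eq, mul_algebraMap_eq]
    abel
  | grade1 i =>
    intro b
    induction b using FreeAlgebra.induction with
    | grade0 r =>
      intro z w
      rw [Fm_algebraMap_right D hL, th_zero, Gm_algebraMap, th_zero, th_zero,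
        algebraMap_mul_eq, mul_algebraMap_eq]
      abel
    | grade1 j => exact hbase i j
    | mul b c hb hc =>
      intro z w
      rw [FmR2 hL, th_add, th_shift_l1, th_shift_r2, hb, hc, Gm_mul]
      simp only [th_add, th_shift_l2, th_shift_r1, mul_assoc]
      abel
    | add b c hb hc =>
      intro z w
      rw [Fm_add_right, th_add, hb, hc, Gm_add]
      simp only [th_add, add_mul, mul_add, th_add_m]
      abel
  | mul a b ha hb =>
    intro c z w
    rw [FmR1 hL, th_add, th_shift_l2, th_shift_r1, hb, ha, Gm_mul]
    simp only [th_add, th_shift_l2, th_shift_r1, mul_assoc]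
    abel
  | add a b ha hb =>
    intro c z w
    rw [Fm_add_left, th_add, ha, hb, Gm_add]
    simp only [th_add, add_mul, mul_add, th_add_m]
    abel

end Master
section Base
open TensorProduct
variable {K : Type*} [Field K] {A : Type*} [Ring A] [Algebra K A]

lemma base_general (s t : K) (x y z w : A) :
    th ((s+t) • (x ⊗ₜ[K] y - y ⊗ₜ[K] x) + (s-t) • ((1:A) ⊗ₜ[K] (x*y))
        + (t-s) • ((y*x) ⊗ₜ[K] (1:A))) z w =
      th (s • (x ⊗ₜ[K] (1:A) + (1:A) ⊗ₜ[K] x)) z (y*w)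
      - th (s • (x ⊗ₜ[K] (1:A) + (1:A) ⊗ₜ[K] x)) z (w*y)
      + th (t • (y ⊗ₜ[K] (1:A) + (1:A) ⊗ₜ[K] y)) w (x*z)
      - th (t • (y ⊗ₜ[K] (1:A) + (1:A) ⊗ₜ[K] y)) w (z*x) := by
  simp only [th_add, th_sub, th_smul, th_tmul, one_mul, mul_one, mul_assoc]
  rw [tr_rot x z y w, tr_rot y z x w,
    show tr K A (y*(x*(z*w))) = tr K A (z*(w*(y*x))) from
      (tr_rot y x z w).trans (tr_rot x z w y),
    tr_rot x z w y,
    show tr K A (y*(w*(x*z))) = tr K A (z*(y*(w*x))) from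
      (tr_rot y w x z).trans ((tr_rot w x z y).trans (tr_rot x z y w)),
    show tr K A (w*(y*(x*z))) = tr K A (z*(w*(y*x))) from
      (tr_rot w y x z).trans ((tr_rot y x z w).trans (tr_rot x z w y)),
    show tr K A (y*(w*(z*x))) = tr K A (z*(x*(y*w))) from
      (tr_rot y w z x).trans (tr_rot w z x y),
    show tr K A (w*(y*(z*x))) = tr K A (z*(x*(w*y))) from
      (tr_rot w y z x).trans (tr_rot y z x w)]
  module

lemma tr_mul'_flip (u : A ⊗[K] A) :
    tr K A (LinearMap.mul' K A (flipT K A u)) = tr K A (LinearMap.mul' K A u) := by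
  induction u using TensorProduct.induction_on with
  | zero => simp
  | tmul p q => rw [flipT_tmul]; simp only [LinearMap.mul'_apply]; exact trC q p
  | add u v hu hv => simp only [map_add, hu, hv]

end Base

end
end St3

open St3 in
theorem stmt3 {K : Type*} [Field K] [IsAlgClosed K] [CharZero K]
    {d : ℕ} (hd : 1 ≤ d)
    (Lam M : Fin d → Fin d → K)
    (hLam : ∀ i j : Fin d, Lam i j = Lam j i)
    (hMskew : ∀ i j : Fin d, M i j = - M j i)
    (hMdiag : ∀ i : Fin d, M i i = 0)
    (D : FreeAlgebra K (Fin d) ⊗[K] FreeAlgebra K (Fin d) →ₗ[K] FreeAlgebra K (Fin d) ⊗[K] FreeAlgebra K (Fin d))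
    (hL : LeibnizRules K (FreeAlgebra K (Fin d)) D)
    (htype : ∀ i j : Fin d,
      D (FreeAlgebra.ι K i ⊗ₜ[K] FreeAlgebra.ι K j) +
        flipT K (FreeAlgebra K (Fin d)) (D (FreeAlgebra.ι K j ⊗ₜ[K] FreeAlgebra.ι K i)) =
      Lam i j • (FreeAlgebra.ι K i ⊗ₜ[K] FreeAlgebra.ι K j
                  - FreeAlgebra.ι K j ⊗ₜ[K] FreeAlgebra.ι K i) +
      M i j • ((1 : FreeAlgebra K (Fin d)) ⊗ₜ[K] (FreeAlgebra.ι K i * FreeAlgebra.ι K j)) +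
      M j i • ((FreeAlgebra.ι K j * FreeAlgebra.ι K i) ⊗ₜ[K] (1 : FreeAlgebra K (Fin d))))
    (hcond : ∀ i j k l : Fin d, Lam i j - Lam k l = M i l - M k j) :
    ∀ a b : FreeAlgebra K (Fin d),
      br K (FreeAlgebra K (Fin d)) D a b + br K (FreeAlgebra K (Fin d)) D b a ∈ commutatorSpan K (FreeAlgebra K (Fin d)) := by
  intro a b
  set l : Fin d → K := fun i => Lam i i / 2 with hl
  have hbase : ∀ i j : Fin d, ∀ z w : FreeAlgebra K (Fin d),
      th (Fm D (FreeAlgebra.ι K i) (FreeAlgebra.ι K j)) z w =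
        th (Gm l (FreeAlgebra.ι K i)) z (FreeAlgebra.ι K j * w) - th (Gm l (FreeAlgebra.ι K i)) z (w * FreeAlgebra.ι K j)
        + th (Gm l (FreeAlgebra.ι K j)) w (FreeAlgebra.ι K i * z) - th (Gm l (FreeAlgebra.ι K j)) w (z * FreeAlgebra.ι K i) := by
    intro i j z w
    have e1 := hcond i j j j
    have e2 := hcond j i i i
    have e3 := hMskew i j
    have e4 := hMdiag i
    have e5 := hMdiag j
    have hsym := hLam i j
    have hA : Lam i j = l i + l j := by
      simp only [hl]
      linear_combination (e1 + e2 + e3 - e4 - e5 + hsym) / 2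
    have hB : M i j = l i - l j := by
      simp only [hl]
      linear_combination (-e1 + e2 + e3 - e4 + e5 + hsym) / 2
    have hC : M j i = l j - l i := by
      simp only [hl]
      linear_combination (e1 - e2 + e3 + e4 - e5 - hsym) / 2
    have hF : Fm D (FreeAlgebra.ι K i) (FreeAlgebra.ι K j) =
        (l i + l j) • (FreeAlgebra.ι K i ⊗ₜ[K] FreeAlgebra.ι K j - FreeAlgebra.ι K j ⊗ₜ[K] FreeAlgebra.ι K i)
        + (l i - l j) • ((1 : FreeAlgebra K (Fin d)) ⊗ₜ[K] (FreeAlgebra.ι K i * FreeAlgebra.ι K j))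
        + (l j - l i) • ((FreeAlgebra.ι K j * FreeAlgebra.ι K i) ⊗ₜ[K] (1 : FreeAlgebra K (Fin d))) := by
      have h := htype i j
      rw [hA, hB, hC] at h
      exact h
    rw [hF, Gm_ι, Gm_ι]
    exact base_general (l i) (l j) (FreeAlgebra.ι K i) (FreeAlgebra.ι K j) z w
  have hz := master D hL l hbase a b 1 1
  rw [mul_one, one_mul, mul_one, one_mul] at hz
  have hz0 : th (Fm D a b) (1 : FreeAlgebra K (Fin d)) 1 = 0 := by rw [hz]; abel
  have h1 : tr K (FreeAlgebra K (Fin d)) (LinearMap.mul' K (FreeAlgebra K (Fin d)) (Fm D a b)) = 0 := by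
    unfold th at hz0
    rwa [one_tmul_one, one_mul, mul_one] at hz0
  rw [Fm, map_add, map_add, tr_mul'_flip] at h1
  have h2 : tr K (FreeAlgebra K (Fin d)) (br K (FreeAlgebra K (Fin d)) D a b + br K (FreeAlgebra K (Fin d)) D b a) = 0 := by
    rw [map_add]; exact h1
  have h3 : Submodule.Quotient.mk (br K (FreeAlgebra K (Fin d)) D a b + br K (FreeAlgebra K (Fin d)) D b a)
      = (0 : FreeAlgebra K (Fin d) ⧸ commutatorSpan K (FreeAlgebra K (Fin d))) := h2
  exact (Submodule.Quotient.mk_eq_zero _).mp h3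
end

section
/- Let K be an algebraically closed field of characteristic zero, d ≥ 1, and A = K⟨v1,…,vd⟩ the free associative K-algebra. If ⟪-,-⟫ : A⊗A → A⊗A is a mixed double algebra structure on A of weight λ = (λ1,…,λd) ∈ K^d, then {a,b} + {b,a} ∈ [A,A] for all a,b ∈ A; that is, ⟪-,-⟫ is a modified double bracket on A. -/
open TensorProduct

/-! Let `Φ` be the weighted Euler derivation `vᵢ ↦ λᵢ (vᵢ ⊗ 1 + 1 ⊗ vᵢ)` of the free algebra into
`A ⊗ A` with its outer bimodule structure, and `P(a ⊗ b) = (1 ⊗ a) Φ(b) - Φ(b) (a ⊗ 1)`. Both `⟪-,-⟫`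
and `P` satisfy the Leibniz rules, hence so do their symmetrizations `E(a ⊗ b) + E(b ⊗ a)°`; the
mixed condition says that the symmetrizations of `⟪-,-⟫` and of `-½ P` agree on pairs of
generators, so they agree everywhere. As `m(u) ≡ m(u°)` modulo `[A,A]`, the class of
`{a,b} + {b,a}` only depends on the symmetrization, and the bracket `m ∘ P` vanishes. -/

/- An `(f, g)`-derivation `Φ` of the free algebra is the upper right corner of the algebra map
`a ↦ !![f a, Φ a; 0, g a]` into `2 × 2` matrices, which exists by freeness. -/
theorem FreeAlgebra.exists_linearMap_ι_map_mul {R X B : Type*} [CommSemiring R] [Semiring B]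
    [Algebra R B] (f g : FreeAlgebra R X →ₐ[R] B) (w : X → B) :
    ∃ Φ : FreeAlgebra R X →ₗ[R] B, (∀ i, Φ (ι R i) = w i) ∧
      ∀ a b, Φ (a * b) = f a * Φ b + Φ a * g b := by
  let ρ := lift R fun i => !![f (ι R i), w i; 0, g (ι R i)]
  have hρ : ∀ a, ρ a 0 0 = f a ∧ ρ a 1 1 = g a ∧ ρ a 1 0 = 0 := by
    intro a
    induction a using FreeAlgebra.induction with
    | grade0 r => simp [Matrix.algebraMap_matrix_apply]
    | grade1 i => simp [ρ]
    | mul x y hx hy => simp [Matrix.mul_apply, hx, hy]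
    | add x y hx hy => simp [hx, hy]
  refine ⟨Matrix.entryLinearMap R B 0 1 ∘ₗ ρ.toLinearMap, fun i => by simp [ρ], fun a b => ?_⟩
  simp [Matrix.mul_apply, (hρ a).1, (hρ b).2.1]

section DoubleBrackets

variable {K A : Type*} [Field K] [Ring A] [Algebra K A]

@[simp]
lemma flipT_tmul (x y : A) : flipT K A (x ⊗ₜ y) = y ⊗ₜ x := rfl

lemma flipT_mul (u w : A ⊗[K] A) : flipT K A (u * w) = flipT K A u * flipT K A w :=
  map_mul (Algebra.TensorProduct.comm K A A) u w

lemma mul'_one_tmul_mul (a : A) (u : A ⊗[K] A) :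
    LinearMap.mul' K A ((1 ⊗ₜ a) * u) = LinearMap.mul' K A (u * (a ⊗ₜ 1)) := by
  induction u using TensorProduct.induction_on with
  | zero => simp
  | tmul x y => simp [mul_assoc]
  | add p q hp hq => simp [mul_add, add_mul, hp, hq]

lemma mul'_sub_mul'_flipT_mem (u : A ⊗[K] A) :
    LinearMap.mul' K A u - LinearMap.mul' K A (flipT K A u) ∈ commutatorSpan K A := by
  induction u using TensorProduct.induction_on with
  | zero => simp
  | tmul x y => exact Submodule.subset_span ⟨x, y, by simp⟩
  | add p q hp hq =>
    convert Submodule.add_mem _ hp hq using 1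
    simp only [map_add]
    abel

namespace LeibnizRules

variable {E F : A ⊗[K] A →ₗ[K] A ⊗[K] A}

lemma apply_tmul_one (hE : LeibnizRules K A E) (a : A) : E (a ⊗ₜ 1) = 0 := by
  simpa [← Algebra.TensorProduct.one_def] using hE.1 a 1 1

lemma apply_one_tmul (hE : LeibnizRules K A E) (a : A) : E (1 ⊗ₜ a) = 0 := by
  simpa [← Algebra.TensorProduct.one_def] using hE.2 1 1 a

lemma add (hE : LeibnizRules K A E) (hF : LeibnizRules K A F) : LeibnizRules K A (E + F) := by
  constructor <;> intro a b c
  · simp only [LinearMap.add_apply, hE.1, hF.1, mul_add, add_mul]; abel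
  · simp only [LinearMap.add_apply, hE.2, hF.2, mul_add, add_mul]; abel

lemma sub (hE : LeibnizRules K A E) (hF : LeibnizRules K A F) : LeibnizRules K A (E - F) := by
  constructor <;> intro a b c
  · simp only [LinearMap.sub_apply, hE.1, hF.1, mul_sub, sub_mul]; abel
  · simp only [LinearMap.sub_apply, hE.2, hF.2, mul_sub, sub_mul]; abel

lemma smul (hE : LeibnizRules K A E) (r : K) : LeibnizRules K A (r • E) := by
  constructor <;> intro a b c
  · simp only [LinearMap.smul_apply, hE.1, smul_add, mul_smul_comm, smul_mul_assoc]
  · simp only [LinearMap.smul_apply, hE.2, smul_add, mul_smul_comm, smul_mul_assoc]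

lemma flipT_comp_comp_flipT (hE : LeibnizRules K A E) :
    LeibnizRules K A (flipT K A ∘ₗ E ∘ₗ flipT K A) := by
  constructor <;> intro a b c
  · simp [hE.2, flipT_mul]
  · simp [hE.1, flipT_mul]

lemma eq_zero_of_adjoin_eq_top {ι : Type*} {v : ι → A}
    (hv : Algebra.adjoin K (Set.range v) = ⊤) (hE : LeibnizRules K A E)
    (hEv : ∀ i j, E (v i ⊗ₜ v j) = 0) : E = 0 := by
  have induct : ∀ (p : A → Prop), (∀ i, p (v i)) → (∀ r : K, p (algebraMap K A r)) →
      (∀ x y, p x → p y → p (x + y)) → (∀ x y, p x → p y → p (x * y)) → ∀ x, p x := by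
    intro p hgen halg hadd hmul x
    refine Algebra.adjoin_induction (p := fun x _ => p x) ?_ halg
      (fun x y _ _ => hadd x y) (fun x y _ _ => hmul x y) (hv ▸ Algebra.mem_top : x ∈ _)
    rintro _ ⟨i, rfl⟩
    exact hgen i
  have right : ∀ i b, E (v i ⊗ₜ b) = 0 := fun i => induct _ (hEv i)
    (fun r => by simp [Algebra.algebraMap_eq_smul_one, hE.apply_tmul_one])
    (fun x y hx hy => by simp [tmul_add, hx, hy])
    (fun x y hx hy => by simp [hE.1, hx, hy])
  have left : ∀ a b, E (a ⊗ₜ b) = 0 := induct _ right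
    (fun r b => by simp [Algebra.algebraMap_eq_smul_one, ← smul_tmul', hE.apply_one_tmul])
    (fun x y hx hy b => by simp [add_tmul, hx, hy])
    (fun x y hx hy b => by simp [hE.2, hx, hy])
  exact TensorProduct.ext' left

lemma eq_of_adjoin_eq_top {ι : Type*} {v : ι → A}
    (hv : Algebra.adjoin K (Set.range v) = ⊤) (hE : LeibnizRules K A E)
    (hF : LeibnizRules K A F) (hEF : ∀ i j, E (v i ⊗ₜ v j) = F (v i ⊗ₜ v j)) : E = F :=
  sub_eq_zero.mp <| (hE.sub hF).eq_zero_of_adjoin_eq_top hv fun i j => by simp [hEF]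

end LeibnizRules

def symmetrize (E : A ⊗[K] A →ₗ[K] A ⊗[K] A) : A ⊗[K] A →ₗ[K] A ⊗[K] A :=
  E + flipT K A ∘ₗ E ∘ₗ flipT K A

@[simp]
lemma symmetrize_tmul (E : A ⊗[K] A →ₗ[K] A ⊗[K] A) (a b : A) :
    symmetrize E (a ⊗ₜ b) = E (a ⊗ₜ b) + flipT K A (E (b ⊗ₜ a)) := rfl

lemma LeibnizRules.symmetrize {E : A ⊗[K] A →ₗ[K] A ⊗[K] A} (hE : LeibnizRules K A E) :
    LeibnizRules K A (symmetrize E) :=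
  hE.add hE.flipT_comp_comp_flipT

lemma br_smul (r : K) (E : A ⊗[K] A →ₗ[K] A ⊗[K] A) (a b : A) :
    br K A (r • E) a b = r • br K A E a b := by
  simp [br]

lemma br_add_br_sub_mul'_symmetrize_mem (E : A ⊗[K] A →ₗ[K] A ⊗[K] A) (a b : A) :
    br K A E a b + br K A E b a - LinearMap.mul' K A (symmetrize E (a ⊗ₜ b)) ∈
      commutatorSpan K A := by
  convert mul'_sub_mul'_flipT_mem (E (b ⊗ₜ a)) using 1
  simp only [br, symmetrize_tmul, map_add]
  abel

lemma br_add_br_mem_of_symmetrize_eq {E F : A ⊗[K] A →ₗ[K] A ⊗[K] A}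
    (hEF : symmetrize E = symmetrize F)
    (hF : ∀ a b, br K A F a b + br K A F b a ∈ commutatorSpan K A) (a b : A) :
    br K A E a b + br K A E b a ∈ commutatorSpan K A := by
  have hE := br_add_br_sub_mul'_symmetrize_mem E a b
  have hF' := br_add_br_sub_mul'_symmetrize_mem F a b
  rw [hEF] at hE
  simpa using Submodule.add_mem _ (Submodule.sub_mem _ hE hF') (hF a b)

def innerCommutatorBracket (Φ : A →ₗ[K] A ⊗[K] A) : A ⊗[K] A →ₗ[K] A ⊗[K] A :=
  TensorProduct.lift <|
    (LinearMap.mul K (A ⊗[K] A)).compl₁₂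
        (Algebra.TensorProduct.includeRight : A →ₐ[K] A ⊗[K] A).toLinearMap Φ -
      (LinearMap.mul K (A ⊗[K] A)).flip.compl₁₂
        (Algebra.TensorProduct.includeLeft : A →ₐ[K] A ⊗[K] A).toLinearMap Φ

variable {Φ : A →ₗ[K] A ⊗[K] A}

@[simp]
lemma innerCommutatorBracket_tmul (a b : A) :
    innerCommutatorBracket Φ (a ⊗ₜ b) = (1 ⊗ₜ a) * Φ b - Φ b * (a ⊗ₜ 1) := by
  simp [innerCommutatorBracket]

lemma br_innerCommutatorBracket (a b : A) : br K A (innerCommutatorBracket Φ) a b = 0 := by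
  simp [br, mul'_one_tmul_mul]

lemma leibnizRules_innerCommutatorBracket
    (hΦ : ∀ a b, Φ (a * b) = (a ⊗ₜ 1) * Φ b + Φ a * (1 ⊗ₜ b)) :
    LeibnizRules K A (innerCommutatorBracket Φ) := by
  have comm : ∀ x y : A, (x ⊗ₜ[K] (1 : A)) * (1 ⊗ₜ y) = (1 ⊗ₜ y) * (x ⊗ₜ 1) := by simp
  constructor <;> intro a b c
  · simp only [innerCommutatorBracket_tmul, hΦ, mul_add, add_mul, mul_sub, sub_mul, mul_assoc]
    simp only [← mul_assoc, comm]
    abel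
  · simp only [innerCommutatorBracket_tmul, mul_sub, sub_mul, ← mul_assoc]
    simp [mul_assoc]

lemma symmetrize_innerCommutatorBracket_tmul {x y : A} {μ ν : K}
    (hx : Φ x = μ • (x ⊗ₜ 1 + 1 ⊗ₜ x)) (hy : Φ y = ν • (y ⊗ₜ 1 + 1 ⊗ₜ y)) :
    symmetrize ((-2⁻¹ : K) • innerCommutatorBracket Φ) (x ⊗ₜ y) =
      ((μ + ν) / 2) • (x ⊗ₜ y - y ⊗ₜ x) + ((μ - ν) / 2) • (1 ⊗ₜ (x * y) - (y * x) ⊗ₜ 1) := by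
  simp only [symmetrize_tmul, LinearMap.smul_apply, innerCommutatorBracket_tmul, hx, hy, map_smul,
    map_sub, flipT_tmul, map_add, mul_add, add_mul, mul_smul_comm, smul_mul_assoc,
    Algebra.TensorProduct.tmul_mul_tmul, one_mul, mul_one]
  match_scalars <;> ring

end DoubleBrackets

theorem stmt4_general {K : Type*} [Field K]
    {d : ℕ} (lam : Fin d → K)
    (D : FreeAlgebra K (Fin d) ⊗[K] FreeAlgebra K (Fin d) →ₗ[K] FreeAlgebra K (Fin d) ⊗[K] FreeAlgebra K (Fin d))
    (hD : IsMixedDouble K (FreeAlgebra K (Fin d)) (FreeAlgebra.ι K) lam D) :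
    ∀ a b : FreeAlgebra K (Fin d),
      br K (FreeAlgebra K (Fin d)) D a b + br K (FreeAlgebra K (Fin d)) D b a ∈ commutatorSpan K (FreeAlgebra K (Fin d)) := by
  obtain ⟨hLeibniz, hgen⟩ := hD
  obtain ⟨Φ, hΦι, hΦ⟩ := FreeAlgebra.exists_linearMap_ι_map_mul
    Algebra.TensorProduct.includeLeft Algebra.TensorProduct.includeRight
    fun i => lam i • (FreeAlgebra.ι K i ⊗ₜ 1 + 1 ⊗ₜ FreeAlgebra.ι K i)
  have hsymm : symmetrize D = symmetrize ((-2⁻¹ : K) • innerCommutatorBracket Φ) :=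
    hLeibniz.symmetrize.eq_of_adjoin_eq_top (FreeAlgebra.adjoin_range_ι K (Fin d))
      ((leibnizRules_innerCommutatorBracket hΦ).smul _).symmetrize fun i j => by
        rw [symmetrize_tmul, hgen, symmetrize_innerCommutatorBracket_tmul (hΦι i) (hΦι j)]
  exact br_add_br_mem_of_symmetrize_eq hsymm fun a b => by
    simp [br_smul, br_innerCommutatorBracket]

theorem stmt4 {K : Type*} [Field K] [IsAlgClosed K] [CharZero K]
    {d : ℕ} (hd : 1 ≤ d) (lam : Fin d → K)
    (D : FreeAlgebra K (Fin d) ⊗[K] FreeAlgebra K (Fin d) →ₗ[K] FreeAlgebra K (Fin d) ⊗[K] FreeAlgebra K (Fin d))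
    (hD : IsMixedDouble K (FreeAlgebra K (Fin d)) (FreeAlgebra.ι K) lam D) :
    ∀ a b : FreeAlgebra K (Fin d),
      br K (FreeAlgebra K (Fin d)) D a b + br K (FreeAlgebra K (Fin d)) D b a ∈ commutatorSpan K (FreeAlgebra K (Fin d)) :=
  stmt4_general lam D hD
end

section
/- Let K be an algebraically closed field of characteristic zero, d ≥ 1, and A = K⟨v1,…,vd⟩ the free associative K-algebra. If ⟪-,-⟫ is a mixed double Poisson algebra structure on A of weight λ = (λ1,…,λd) ∈ K^d, then for all 1≤i,j≤d and every c ∈ A one has DJac(v_i,v_j,c) = −((λ_i+λ_j)/2)·(v_j ⊗₁ ⟪v_i,c⟫) + ((λ_i−λ_j)/2)·(1 ⊗₁ (v_j ∗ ⟪v_i,c⟫)). -/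
open TensorProduct

/-! As functions of `c`, both sides are linear and satisfy the outer Leibniz rule
`f (c * c') = (c ⊗ 1 ⊗ 1) * f c' + f c * (1 ⊗ 1 ⊗ c')`. For the double Jacobiator this follows
from the Leibniz rule of `⟪-,-⟫` in its second argument: the cross terms `(⟪a,c⟫ ⊗ 1) * (1 ⊗ ⟪b,c'⟫)`
produced by `⟪a,⟪b,-⟫⟫_L` and by `⟪b,⟪a,-⟫⟫_R` cancel. For the right-hand side it holds because
`x ⊗₁ -` and left multiplication by `1 ⊗ v_j` commute with the outer bimodule structure. A linear map
on a free algebra obeying such a rule is determined by its values on `1` and on the generators, and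
there the identity is the Poisson property. -/

namespace FreeAlgebra

variable {R X M : Type*} [CommSemiring R] [NonUnitalNonAssocSemiring M] [Module R M]

theorem linearMap_ext_of_leibniz (l r : FreeAlgebra R X → M) {f g : FreeAlgebra R X →ₗ[R] M}
    (hf : ∀ x y, f (x * y) = l x * f y + f x * r y)
    (hg : ∀ x y, g (x * y) = l x * g y + g x * r y)
    (h_one : f 1 = g 1) (h_ι : ∀ i, f (ι R i) = g (ι R i)) : f = g := by
  ext c
  induction c using FreeAlgebra.induction with
  | grade0 s => rw [Algebra.algebraMap_eq_smul_one, map_smul, map_smul, h_one]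
  | grade1 i => exact h_ι i
  | mul x y hx hy => rw [hf, hg, hx, hy]
  | add x y hx hy => rw [map_add, map_add, hx, hy]

end FreeAlgebra

section DoubleBracket

open Algebra.TensorProduct (tmul_mul_tmul)

variable {K : Type*} [Field K] {A : Type*} [Ring A] [Algebra K A] {D : A ⊗[K] A →ₗ[K] A ⊗[K] A}

variable (D) in
def IsLeibnizInSecond : Prop :=
  ∀ a b c : A, D (a ⊗ₜ[K] (b * c)) = (b ⊗ₜ[K] 1) * D (a ⊗ₜ[K] c) + D (a ⊗ₜ[K] b) * (1 ⊗ₜ[K] c)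

theorem LeibnizRules.isLeibnizInSecond (hD : LeibnizRules K A D) : IsLeibnizInSecond D :=
  hD.1

def IsOuterDerivation (f : A →ₗ[K] (A ⊗[K] A) ⊗[K] A) : Prop :=
  ∀ x y : A, f (x * y) = ((x ⊗ₜ[K] 1) ⊗ₜ[K] 1) * f y + f x * ((1 ⊗ₜ[K] 1) ⊗ₜ[K] y)

namespace IsOuterDerivation

variable {f g : A →ₗ[K] (A ⊗[K] A) ⊗[K] A}

theorem map_one (hf : IsOuterDerivation f) : f 1 = 0 := by
  have h := hf 1 1
  rwa [mul_one, ← Algebra.TensorProduct.one_def, ← Algebra.TensorProduct.one_def, one_mul,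
    mul_one, left_eq_add] at h

theorem add (hf : IsOuterDerivation f) (hg : IsOuterDerivation g) : IsOuterDerivation (f + g) := by
  intro x y
  simp only [LinearMap.add_apply, hf x y, hg x y, mul_add, add_mul]
  abel

theorem smul (hf : IsOuterDerivation f) (s : K) : IsOuterDerivation (s • f) := by
  intro x y
  simp only [LinearMap.smul_apply, hf x y, smul_add, mul_smul_comm, smul_mul_assoc]

theorem ext_freeAlgebra {X : Type*} {f g : FreeAlgebra K X →ₗ[K] _}
    (hf : IsOuterDerivation f) (hg : IsOuterDerivation g)
    (h_ι : ∀ i, f (FreeAlgebra.ι K i) = g (FreeAlgebra.ι K i)) : f = g :=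
  FreeAlgebra.linearMap_ext_of_leibniz _ _ hf hg (by rw [hf.map_one, hg.map_one]) h_ι

end IsOuterDerivation

theorem swap23_tmul (x y z : A) : swap23 K A ((x ⊗ₜ[K] y) ⊗ₜ[K] z) = (x ⊗ₜ[K] z) ⊗ₜ[K] y := by
  simp [swap23]

theorem otimes1_tmul (c x y : A) : otimes1 K A c (x ⊗ₜ[K] y) = (x ⊗ₜ[K] c) ⊗ₜ[K] y := rfl

theorem assoc_symm_mul_tmul (c x : A) (z : A ⊗[K] A) :
    (TensorProduct.assoc K A A A).symm ((c * x) ⊗ₜ[K] z) =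
      ((c ⊗ₜ[K] 1) ⊗ₜ[K] 1) * (TensorProduct.assoc K A A A).symm (x ⊗ₜ[K] z) := by
  induction z using TensorProduct.induction_on <;> simp_all [tmul_mul_tmul, tmul_add, mul_add]

theorem assoc_symm_tmul_mul_left (x y : A) (z : A ⊗[K] A) :
    (TensorProduct.assoc K A A A).symm (x ⊗ₜ[K] ((y ⊗ₜ[K] 1) * z)) =
      ((x ⊗ₜ[K] y) ⊗ₜ[K] 1) * (TensorProduct.assoc K A A A).symm (1 ⊗ₜ[K] z) := by
  induction z using TensorProduct.induction_on <;> simp_all [tmul_mul_tmul, tmul_add, mul_add]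

theorem assoc_symm_tmul_mul_right (x y : A) (z : A ⊗[K] A) :
    (TensorProduct.assoc K A A A).symm (x ⊗ₜ[K] (z * (1 ⊗ₜ[K] y))) =
      (TensorProduct.assoc K A A A).symm (x ⊗ₜ[K] z) * ((1 ⊗ₜ[K] 1) ⊗ₜ[K] y) := by
  induction z using TensorProduct.induction_on <;> simp_all [tmul_mul_tmul, tmul_add, add_mul]

theorem swap23_mul_left (c : A) (z : A ⊗[K] A) (q : A) :
    swap23 K A (((c ⊗ₜ[K] 1) * z) ⊗ₜ[K] q) = ((c ⊗ₜ[K] 1) ⊗ₜ[K] 1) * swap23 K A (z ⊗ₜ[K] q) := by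
  induction z using TensorProduct.induction_on <;>
    simp_all [tmul_mul_tmul, swap23_tmul, add_tmul, mul_add]

theorem swap23_mul_right (c : A) (z : A ⊗[K] A) (q : A) :
    swap23 K A ((z * (1 ⊗ₜ[K] c)) ⊗ₜ[K] q) = swap23 K A (z ⊗ₜ[K] q) * ((1 ⊗ₜ[K] 1) ⊗ₜ[K] c) := by
  induction z using TensorProduct.induction_on <;>
    simp_all [tmul_mul_tmul, swap23_tmul, add_tmul, add_mul]

theorem otimes1_mul_left (x c : A) (w : A ⊗[K] A) :
    otimes1 K A x ((c ⊗ₜ[K] 1) * w) = ((c ⊗ₜ[K] 1) ⊗ₜ[K] 1) * otimes1 K A x w := by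
  induction w using TensorProduct.induction_on <;> simp_all [tmul_mul_tmul, otimes1_tmul, mul_add]

theorem otimes1_mul_right (x c : A) (w : A ⊗[K] A) :
    otimes1 K A x (w * (1 ⊗ₜ[K] c)) = otimes1 K A x w * ((1 ⊗ₜ[K] 1) ⊗ₜ[K] c) := by
  induction w using TensorProduct.induction_on <;> simp_all [tmul_mul_tmul, otimes1_tmul, add_mul]

theorem dL_tmul (a x y : A) : dL K A D a (x ⊗ₜ[K] y) = D (a ⊗ₜ[K] x) ⊗ₜ[K] y := rfl

theorem dR_tmul (a x y : A) :
    dR K A D a (x ⊗ₜ[K] y) = (TensorProduct.assoc K A A A).symm (x ⊗ₜ[K] D (a ⊗ₜ[K] y)) := rfl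

theorem dLfst_tmul (c x y : A) :
    dLfst K A D c (x ⊗ₜ[K] y) = swap23 K A (D (x ⊗ₜ[K] c) ⊗ₜ[K] y) := rfl

theorem dL_mul_left (hD : IsLeibnizInSecond D) (a c : A) (w : A ⊗[K] A) :
    dL K A D a ((c ⊗ₜ[K] 1) * w) =
      ((c ⊗ₜ[K] 1) ⊗ₜ[K] 1) * dL K A D a w +
        (D (a ⊗ₜ[K] c) ⊗ₜ[K] 1) * (TensorProduct.assoc K A A A).symm (1 ⊗ₜ[K] w) := by
  induction w using TensorProduct.induction_on with
  | zero => simp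
  | tmul x y => simp [tmul_mul_tmul, dL_tmul, hD a c x, add_tmul]
  | add w₁ w₂ h₁ h₂ =>
    simp only [mul_add, map_add, tmul_add, h₁, h₂]
    abel

theorem dL_mul_right (a c : A) (w : A ⊗[K] A) :
    dL K A D a (w * (1 ⊗ₜ[K] c)) = dL K A D a w * ((1 ⊗ₜ[K] 1) ⊗ₜ[K] c) := by
  induction w using TensorProduct.induction_on <;>
    simp_all [tmul_mul_tmul, dL_tmul, add_mul, ← Algebra.TensorProduct.one_def]

theorem dR_mul_left (b c : A) (w : A ⊗[K] A) :
    dR K A D b ((c ⊗ₜ[K] 1) * w) = ((c ⊗ₜ[K] 1) ⊗ₜ[K] 1) * dR K A D b w := by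
  induction w using TensorProduct.induction_on <;>
    simp_all [tmul_mul_tmul, dR_tmul, assoc_symm_mul_tmul, mul_add]

theorem dR_mul_right (hD : IsLeibnizInSecond D) (b c : A) (w : A ⊗[K] A) :
    dR K A D b (w * (1 ⊗ₜ[K] c)) =
      (w ⊗ₜ[K] 1) * (TensorProduct.assoc K A A A).symm (1 ⊗ₜ[K] D (b ⊗ₜ[K] c)) +
        dR K A D b w * ((1 ⊗ₜ[K] 1) ⊗ₜ[K] c) := by
  induction w using TensorProduct.induction_on with
  | zero => simp
  | tmul x y =>
    rw [tmul_mul_tmul, mul_one, dR_tmul, hD b y c, tmul_add, map_add, assoc_symm_tmul_mul_left,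
      assoc_symm_tmul_mul_right, dR_tmul]
  | add w₁ w₂ h₁ h₂ =>
    simp only [add_mul, map_add, add_tmul, h₁, h₂]
    abel

theorem dLfst_mul (hD : IsLeibnizInSecond D) (c c' : A) (u : A ⊗[K] A) :
    dLfst K A D (c * c') u =
      ((c ⊗ₜ[K] 1) ⊗ₜ[K] 1) * dLfst K A D c' u + dLfst K A D c u * ((1 ⊗ₜ[K] 1) ⊗ₜ[K] c') := by
  induction u using TensorProduct.induction_on with
  | zero => simp
  | tmul p q => simp [dLfst_tmul, hD p c c', add_tmul, swap23_mul_left, swap23_mul_right]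
  | add u₁ u₂ h₁ h₂ =>
    simp only [map_add, h₁, h₂, mul_add, add_mul]
    abel

variable (D) in
def DJacₗ (a b : A) : A →ₗ[K] (A ⊗[K] A) ⊗[K] A where
  toFun := DJac K A D a b
  map_add' c c' := by
    simp only [DJac, dLfst, tmul_add, map_add, LinearMap.rTensor_add, LinearMap.comp_add,
      LinearMap.add_apply]
    abel
  map_smul' s c := by
    simp only [DJac, dLfst, tmul_smul, map_smul, LinearMap.rTensor_smul, LinearMap.comp_smul,
      LinearMap.smul_apply, RingHom.id_apply, smul_sub]

theorem isOuterDerivation_DJacₗ (hD : IsLeibnizInSecond D) (a b : A) :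
    IsOuterDerivation (DJacₗ D a b) := by
  intro c c'
  simp only [DJacₗ, LinearMap.coe_mk, AddHom.coe_mk, DJac, hD b c c', hD a c c', map_add,
    dL_mul_left hD, dL_mul_right, dR_mul_left, dR_mul_right hD, dLfst_mul hD, mul_sub, sub_mul]
  abel

theorem isOuterDerivation_otimes1_comp (hD : IsLeibnizInSecond D) (x a : A) :
    IsOuterDerivation (otimes1 K A x ∘ₗ D ∘ₗ TensorProduct.mk K A A a) := by
  intro c c'
  simp only [LinearMap.comp_apply, TensorProduct.mk_apply, hD a c c', map_add, otimes1_mul_left,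
    otimes1_mul_right]

theorem isOuterDerivation_otimes1_comp_mulLeft (hD : IsLeibnizInSecond D) (x y a : A) :
    IsOuterDerivation
      (otimes1 K A x ∘ₗ LinearMap.mulLeft K (1 ⊗ₜ[K] y) ∘ₗ D ∘ₗ TensorProduct.mk K A A a) := by
  intro c c'
  have h_comm : Commute ((1 : A) ⊗ₜ[K] y) (c ⊗ₜ[K] 1) := by
    simp [Commute, SemiconjBy, tmul_mul_tmul]
  simp only [LinearMap.comp_apply, TensorProduct.mk_apply, LinearMap.mulLeft_apply]
  rw [hD a c c', mul_add, ← mul_assoc, h_comm.eq, mul_assoc, ← mul_assoc _ _ (1 ⊗ₜ[K] c'),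
    map_add, otimes1_mul_left, otimes1_mul_right]

end DoubleBracket

theorem stmt7_general {K : Type*} [Field K]
    {d : ℕ} (lam : Fin d → K)
    (D : FreeAlgebra K (Fin d) ⊗[K] FreeAlgebra K (Fin d) →ₗ[K] FreeAlgebra K (Fin d) ⊗[K] FreeAlgebra K (Fin d))
    (hD : IsMixedDoublePoisson K (FreeAlgebra K (Fin d)) (FreeAlgebra.ι K) lam D) :
    ∀ (i j : Fin d) (c : FreeAlgebra K (Fin d)),
      DJac K (FreeAlgebra K (Fin d)) D (FreeAlgebra.ι K i) (FreeAlgebra.ι K j) c =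
        (-((lam i + lam j) / 2)) •
            otimes1 K (FreeAlgebra K (Fin d)) (FreeAlgebra.ι K j) (D (FreeAlgebra.ι K i ⊗ₜ[K] c)) +
        ((lam i - lam j) / 2) •
            otimes1 K (FreeAlgebra K (Fin d)) (1 : FreeAlgebra K (Fin d))
              (((1 : FreeAlgebra K (Fin d)) ⊗ₜ[K] FreeAlgebra.ι K j) *
                D (FreeAlgebra.ι K i ⊗ₜ[K] c)) := by
  obtain ⟨⟨hL, -⟩, h_poisson⟩ := hD
  have hLeib : IsLeibnizInSecond D := hL.isLeibnizInSecond
  intro i j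
  have h := IsOuterDerivation.ext_freeAlgebra (isOuterDerivation_DJacₗ hLeib _ _)
    (((isOuterDerivation_otimes1_comp hLeib _ _).smul (-((lam i + lam j) / 2))).add
      ((isOuterDerivation_otimes1_comp_mulLeft hLeib 1 _ _).smul ((lam i - lam j) / 2)))
    (h_poisson i j)
  exact LinearMap.congr_fun h

theorem stmt7 {K : Type*} [Field K] [IsAlgClosed K] [CharZero K]
    {d : ℕ} (hd : 1 ≤ d) (lam : Fin d → K)
    (D : FreeAlgebra K (Fin d) ⊗[K] FreeAlgebra K (Fin d) →ₗ[K] FreeAlgebra K (Fin d) ⊗[K] FreeAlgebra K (Fin d))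
    (hD : IsMixedDoublePoisson K (FreeAlgebra K (Fin d)) (FreeAlgebra.ι K) lam D) :
    ∀ (i j : Fin d) (c : FreeAlgebra K (Fin d)),
      DJac K (FreeAlgebra K (Fin d)) D (FreeAlgebra.ι K i) (FreeAlgebra.ι K j) c =
        (-((lam i + lam j) / 2)) •
            otimes1 K (FreeAlgebra K (Fin d)) (FreeAlgebra.ι K j) (D (FreeAlgebra.ι K i ⊗ₜ[K] c)) +
        ((lam i - lam j) / 2) •
            otimes1 K (FreeAlgebra K (Fin d)) (1 : FreeAlgebra K (Fin d))
              (((1 : FreeAlgebra K (Fin d)) ⊗ₜ[K] FreeAlgebra.ι K j) *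
                D (FreeAlgebra.ι K i ⊗ₜ[K] c)) :=
  stmt7_general lam D hD
end

section
/- Let K be an algebraically closed field of characteristic zero, λ ∈ K, and α, β ∈ {0, λ}. Let A = K⟨v,w⟩ be the free associative K-algebra on two generators. Every K-linear map ⟪-,-⟫ : A⊗A → A⊗A satisfying the Leibniz rules with ⟪v,v⟫ = 0, ⟪w,w⟫ = 0, ⟪v,w⟫ = α·(1⊗(vw)) − β·((wv)⊗1), and ⟪w,v⟫ = (−λ+β)·(1⊗(wv)) + (λ−α)·((vw)⊗1) is a mixed double Poisson algebra structure on A of weight (λ,−λ). -/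
open TensorProduct

set_option maxHeartbeats 1600000 in
set_option synthInstance.maxHeartbeats 200000 in
theorem stmt11 {K : Type*} [Field K] [IsAlgClosed K] [CharZero K]
    (lam a b : K) (ha : a = 0 ∨ a = lam) (hb : b = 0 ∨ b = lam)
    (D : FreeAlgebra K (Fin 2) ⊗[K] FreeAlgebra K (Fin 2) →ₗ[K] FreeAlgebra K (Fin 2) ⊗[K] FreeAlgebra K (Fin 2))
    (hL : LeibnizRules K (FreeAlgebra K (Fin 2)) D)
    (hvv : D (FreeAlgebra.ι K (0 : Fin 2) ⊗ₜ[K] FreeAlgebra.ι K (0 : Fin 2)) = 0)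
    (hww : D (FreeAlgebra.ι K (1 : Fin 2) ⊗ₜ[K] FreeAlgebra.ι K (1 : Fin 2)) = 0)
    (hvw : D (FreeAlgebra.ι K (0 : Fin 2) ⊗ₜ[K] FreeAlgebra.ι K (1 : Fin 2)) =
      a • ((1 : FreeAlgebra K (Fin 2)) ⊗ₜ[K] (FreeAlgebra.ι K (0 : Fin 2) * FreeAlgebra.ι K (1 : Fin 2))) -
      b • ((FreeAlgebra.ι K (1 : Fin 2) * FreeAlgebra.ι K (0 : Fin 2)) ⊗ₜ[K] (1 : FreeAlgebra K (Fin 2))))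
    (hwv : D (FreeAlgebra.ι K (1 : Fin 2) ⊗ₜ[K] FreeAlgebra.ι K (0 : Fin 2)) =
      (-lam + b) • ((1 : FreeAlgebra K (Fin 2)) ⊗ₜ[K] (FreeAlgebra.ι K (1 : Fin 2) * FreeAlgebra.ι K (0 : Fin 2))) +
      (lam - a) • ((FreeAlgebra.ι K (0 : Fin 2) * FreeAlgebra.ι K (1 : Fin 2)) ⊗ₜ[K] (1 : FreeAlgebra K (Fin 2)))) :
    IsMixedDoublePoisson K (FreeAlgebra K (Fin 2)) (FreeAlgebra.ι K) ![lam, -lam] D := by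
  obtain ⟨hL1, hL2⟩ := hL
  have hx1 : ∀ x : FreeAlgebra K (Fin 2), D (x ⊗ₜ[K] (1 : FreeAlgebra K (Fin 2))) = 0 := by
    intro x
    have h := hL1 x 1 1
    rw [mul_one, ← Algebra.TensorProduct.one_def, one_mul, mul_one] at h
    exact add_eq_left.mp h.symm
  have h1x : ∀ x : FreeAlgebra K (Fin 2), D ((1 : FreeAlgebra K (Fin 2)) ⊗ₜ[K] x) = 0 := by
    intro x
    have h := hL2 1 1 x
    rw [one_mul, ← Algebra.TensorProduct.one_def, one_mul, mul_one] at h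
    exact add_eq_left.mp h.symm
  have hfin : ∀ i : Fin 2, i = 0 ∨ i = 1 := by decide
  refine ⟨⟨⟨hL1, hL2⟩, ?_⟩, ?_⟩
  · intro i j
    rcases hfin i with rfl | rfl <;> rcases hfin j with rfl | rfl <;>
      simp only [Fin.isValue, Matrix.cons_val_zero, Matrix.cons_val_one, Matrix.head_cons,
        flipT, LinearEquiv.coe_coe, hvv, hww, hvw, hwv, map_zero, map_add, map_sub, map_smul,
        TensorProduct.comm_tmul] <;>
      module
  · intro i j k
    rcases ha with rfl | rfl <;> rcases hb with rfl | rfl <;>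
    rcases hfin i with rfl | rfl <;> rcases hfin j with rfl | rfl <;> rcases hfin k with rfl | rfl <;>
      simp only [DJac, dL, dR, dLfst, otimes1, swap23, Fin.isValue, Matrix.cons_val_zero,
        Matrix.cons_val_one, Matrix.head_cons, hvv, hww, hvw, hwv, hx1, h1x, hL1, hL2,
        map_add, map_sub, map_smul, map_zero, smul_zero, zero_smul, map_neg, neg_zero,
        LinearMap.coe_comp, Function.comp_apply, LinearEquiv.coe_coe,
        LinearMap.rTensor_tmul, LinearMap.lTensor_tmul, TensorProduct.mk_apply,
        LinearMap.flip_apply, TensorProduct.assoc_tmul, TensorProduct.assoc_symm_tmul,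
        TensorProduct.comm_tmul, Algebra.TensorProduct.tmul_mul_tmul,
        mul_one, one_mul, mul_smul_comm, smul_mul_assoc, mul_zero, zero_mul,
        add_zero, zero_add, mul_assoc, TensorProduct.tmul_sub, TensorProduct.sub_tmul,
        TensorProduct.tmul_add, TensorProduct.add_tmul, ← TensorProduct.smul_tmul',
        TensorProduct.tmul_smul, sub_zero, zero_sub, TensorProduct.tmul_zero,
        TensorProduct.zero_tmul, add_mul, mul_add, sub_mul, mul_sub, neg_mul, mul_neg,
        neg_smul, smul_neg, neg_neg, smul_smul, TensorProduct.neg_tmul,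
        TensorProduct.tmul_neg] <;>
      module
end

section
/- Let K be an algebraically closed field of characteristic zero, λ ∈ K, and α̃, β̃ ∈ {0, λ}. Let A = K⟨v,w⟩ be the free associative K-algebra on two generators. Every K-linear map ⟪-,-⟫ : A⊗A → A⊗A satisfying the Leibniz rules with ⟪v,v⟫ = 0, ⟪w,w⟫ = 0, ⟪v,w⟫ = α̃·(v⊗w) − β̃·(w⊗v), and ⟪w,v⟫ = (−λ+β̃)·(v⊗w) + (λ−α̃)·(w⊗v) is a mixed double Poisson algebra structure on A of weight (λ,λ). -/
open TensorProduct

set_option maxHeartbeats 1000000 in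
theorem stmt12 {K : Type*} [Field K] [IsAlgClosed K] [CharZero K]
    (lam a b : K) (ha : a = 0 ∨ a = lam) (hb : b = 0 ∨ b = lam)
    (D : FreeAlgebra K (Fin 2) ⊗[K] FreeAlgebra K (Fin 2) →ₗ[K] FreeAlgebra K (Fin 2) ⊗[K] FreeAlgebra K (Fin 2))
    (hL : LeibnizRules K (FreeAlgebra K (Fin 2)) D)
    (hvv : D (FreeAlgebra.ι K (0 : Fin 2) ⊗ₜ[K] FreeAlgebra.ι K (0 : Fin 2)) = 0)
    (hww : D (FreeAlgebra.ι K (1 : Fin 2) ⊗ₜ[K] FreeAlgebra.ι K (1 : Fin 2)) = 0)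
    (hvw : D (FreeAlgebra.ι K (0 : Fin 2) ⊗ₜ[K] FreeAlgebra.ι K (1 : Fin 2)) =
      a • (FreeAlgebra.ι K (0 : Fin 2) ⊗ₜ[K] FreeAlgebra.ι K (1 : Fin 2)) - b • (FreeAlgebra.ι K (1 : Fin 2) ⊗ₜ[K] FreeAlgebra.ι K (0 : Fin 2)))
    (hwv : D (FreeAlgebra.ι K (1 : Fin 2) ⊗ₜ[K] FreeAlgebra.ι K (0 : Fin 2)) =
      (-lam + b) • (FreeAlgebra.ι K (0 : Fin 2) ⊗ₜ[K] FreeAlgebra.ι K (1 : Fin 2)) + (lam - a) • (FreeAlgebra.ι K (1 : Fin 2) ⊗ₜ[K] FreeAlgebra.ι K (0 : Fin 2))) :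
    IsMixedDoublePoisson K (FreeAlgebra K (Fin 2)) (FreeAlgebra.ι K) ![lam, lam] D := by

  constructor
  · refine ⟨hL, fun i j => ?_⟩
    fin_cases i <;> fin_cases j <;>
      simp only [Fin.mk_zero, Fin.mk_one, Fin.isValue, Matrix.cons_val_zero, Matrix.cons_val_one, Matrix.head_cons,
        hvv, hww, hvw, hwv, map_zero, map_add, map_sub, map_smul, flipT,
        LinearEquiv.coe_coe, TensorProduct.comm_tmul] <;>
      match_scalars <;> ring
  · intro i j k
    fin_cases i <;> fin_cases j <;> fin_cases k <;>
      simp only [Fin.mk_zero, Fin.mk_one, Fin.isValue, Matrix.cons_val_zero, Matrix.cons_val_one,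
        Matrix.head_cons, DJac, dL, dR, dLfst, swap23, otimes1, flipT,
        hvv, hww, hvw, hwv, map_zero, map_add, map_sub, map_smul, smul_zero, zero_sub, sub_zero,
        LinearMap.comp_apply, LinearEquiv.coe_coe, LinearMap.rTensor_tmul, LinearMap.lTensor_tmul,
        TensorProduct.add_tmul, TensorProduct.tmul_add, TensorProduct.sub_tmul,
        TensorProduct.tmul_sub, ← TensorProduct.smul_tmul', TensorProduct.tmul_smul,
        TensorProduct.zero_tmul, TensorProduct.tmul_zero, zero_smul, smul_zero,
        TensorProduct.mk_apply, TensorProduct.assoc_tmul, TensorProduct.assoc_symm_tmul,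
        TensorProduct.comm_tmul, LinearMap.flip_apply,
        Algebra.TensorProduct.tmul_mul_tmul, one_mul, mul_one] <;>
      rcases ha with rfl | rfl <;> rcases hb with rfl | rfl <;>
      match_scalars <;> ring
end

section
/- Let K be an algebraically closed field of characteristic zero, λ, ρ ∈ K, Γ = (γ1,γ2,γ3,γ4) ∈ K^4, and A = K⟨v,w⟩ the free associative K-algebra on two generators. Let ⟪-,-⟫ : A⊗A → A⊗A be a nonzero K-linear map satisfying the Leibniz rules with ⟪v,v⟫ = 0, ⟪w,w⟫ = 0, ⟪v,w⟫ = −(γ1/2)·(v⊗w) + (γ2/2)·(w⊗v) − (γ3/2)·(1⊗(vw)) + (γ4/2)·((wv)⊗1), and ⟪w,v⟫ = −((λ+ρ+γ2)/2)·(v⊗w) + ((λ+ρ+γ1)/2)·(w⊗v) − ((λ−ρ+γ4)/2)·(1⊗(wv)) + ((λ−ρ+γ3)/2)·((vw)⊗1). Then the two identities DJac(v,v,w) = −λ·(v ⊗₁ ⟪v,w⟫) and DJac(w,w,v) = −ρ·(w ⊗₁ ⟪w,v⟫) both hold if and only if one of the following is true: (1) ρ = −λ and Γ is one of (0,0,−2λ,−2λ),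 (0,0,−2λ,0), (0,0,0,−2λ), (0,0,0,0); (2) ρ = λ and Γ is one of (−2λ,−2λ,0,0), (−2λ,0,0,0), (0,−2λ,0,0), (0,0,0,0); (3) ρ = λ or ρ = −λ, and Γ is one of (0,−2λ,−2λ,0), (−2λ,0,0,−2λ). -/
open TensorProduct

/-!
The Leibniz rules give `⟪x, 1⟫ = 0`, and together with `⟪x, x⟫ = 0` also
`⟪x, xy⟫ = (x ⊗ 1)⟪x, y⟫` and `⟪x, yx⟫ = ⟪x, y⟫(1 ⊗ x)`. Hence for
`⟪x, y⟫ = a₁ x⊗y + a₂ y⊗x + a₃ 1⊗xy + a₄ yx⊗1` the difference `DJac(x, x, y) + μ (x ⊗₁ ⟪x, y⟫)`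
is a combination of eight triple monomials with coefficients quadratic in `a₁, …, a₄, μ`.
In the free algebra these monomials are distinct basis vectors, so each identity
`DJac(x, x, y) = -μ (x ⊗₁ ⟪x, y⟫)` amounts to six quadratic equations. For `(x, y) = (v, w)`
they say that each `γₖ` is `0` or `-2λ`, with `γ₁γ₃ = γ₂γ₄ = 0`; for `(x, y) = (w, v)` they
include `(γ₁ + λ)² = ρ²`, whence `ρ = ±λ`, and the remaining cases are checked one by one.
-/

open TensorProduct FreeAlgebra Module

section Monomials

variable {R X : Type*} [CommRing R]

theorem FreeAlgebra.basisFreeMonoid_apply (m : FreeMonoid X) :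
    basisFreeMonoid R X m = FreeMonoid.lift (ι R) m := by
  simp [basisFreeMonoid, equivMonoidAlgebraFreeMonoid]

theorem FreeAlgebra.eq_zero_of_monomial_combination_eq_zero {i j : X} (hij : i ≠ j)
    {c₁ c₂ c₃ c₄ c₅ c₆ c₇ c₈ : R}
    (h : c₁ • ((ι R i ⊗ₜ[R] ι R i) ⊗ₜ[R] ι R j)
      + c₂ • ((ι R i ⊗ₜ[R] (1 : FreeAlgebra R X)) ⊗ₜ[R] (ι R i * ι R j))
      + c₃ • ((ι R j ⊗ₜ[R] ι R i) ⊗ₜ[R] ι R i)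
      + c₄ • (((ι R j * ι R i) ⊗ₜ[R] (1 : FreeAlgebra R X)) ⊗ₜ[R] ι R i)
      + c₅ • (((1 : FreeAlgebra R X) ⊗ₜ[R] (ι R i * ι R i)) ⊗ₜ[R] ι R j)
      + c₆ • (((1 : FreeAlgebra R X) ⊗ₜ[R] ι R i) ⊗ₜ[R] (ι R i * ι R j))
      + c₇ • ((ι R j ⊗ₜ[R] (ι R i * ι R i)) ⊗ₜ[R] (1 : FreeAlgebra R X))
      + c₈ • (((ι R j * ι R i) ⊗ₜ[R] ι R i) ⊗ₜ[R] (1 : FreeAlgebra R X)) = 0) :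
    c₁ = 0 ∧ c₂ = 0 ∧ c₃ = 0 ∧ c₄ = 0 ∧ c₅ = 0 ∧ c₆ = 0 ∧ c₇ = 0 ∧ c₈ = 0 := by
  set b := basisFreeMonoid R X
  set b₃ := (b.tensorProduct b).tensorProduct b
  have hb : ∀ u v w, (b u ⊗ₜ[R] b v) ⊗ₜ[R] b w = b₃ ((u, v), w) := by simp [b₃]
  have h1 : (1 : FreeAlgebra R X) = b 1 := by simp [b, basisFreeMonoid_apply]
  have hι : ∀ k, ι R k = b (.of k) := by simp [b, basisFreeMonoid_apply]
  have hιι : ∀ k l, ι R k * ι R l = b (.of k * .of l) := by simp [b, basisFreeMonoid_apply]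
  simp only [hιι] at h
  simp only [hι, h1, hb] at h
  have hc := fun p => congrArg (fun t => b₃.repr t p) h
  simp only [map_add, map_smul, Basis.repr_self] at hc
  refine ⟨?_, ?_, ?_, ?_, ?_, ?_, ?_, ?_⟩
  · simpa [Finsupp.single_apply, FreeMonoid.of_injective.eq_iff, hij, hij.symm]
      using hc ((.of i, .of i), .of j)
  · simpa [Finsupp.single_apply, FreeMonoid.of_injective.eq_iff, hij, hij.symm]
      using hc ((.of i, 1), .of i * .of j)
  · simpa [Finsupp.single_apply, FreeMonoid.of_injective.eq_iff, hij, hij.symm]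
      using hc ((.of j, .of i), .of i)
  · simpa [Finsupp.single_apply, FreeMonoid.of_injective.eq_iff, hij, hij.symm]
      using hc ((.of j * .of i, 1), .of i)
  · simpa [Finsupp.single_apply, FreeMonoid.of_injective.eq_iff, hij, hij.symm]
      using hc ((1, .of i * .of i), .of j)
  · simpa [Finsupp.single_apply, FreeMonoid.of_injective.eq_iff, hij, hij.symm]
      using hc ((1, .of i), .of i * .of j)
  · simpa [Finsupp.single_apply, FreeMonoid.of_injective.eq_iff, hij, hij.symm]
      using hc ((.of j, .of i * .of i), 1)
  · simpa [Finsupp.single_apply, FreeMonoid.of_injective.eq_iff, hij, hij.symm]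
      using hc ((.of j * .of i, .of i), 1)

end Monomials

section Expansion

variable {K A : Type*} [Field K] [Ring A] [Algebra K A] {D : A ⊗[K] A →ₗ[K] A ⊗[K] A}

theorem LeibnizRules.apply_tmul_one_s13 (hL : LeibnizRules K A D) (x : A) :
    D (x ⊗ₜ[K] (1 : A)) = 0 := by
  have h := hL.1 x 1 1
  rw [mul_one, ← Algebra.TensorProduct.one_def, one_mul, mul_one] at h
  exact left_eq_add.mp h

theorem DJac_self_add_smul_otimes1 (hL : LeibnizRules K A D) {x y : A} {a₁ a₂ a₃ a₄ : K}
    (μ : K) (hxx : D (x ⊗ₜ[K] x) = 0)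
    (hxy : D (x ⊗ₜ[K] y) =
      a₁ • (x ⊗ₜ[K] y) + a₂ • (y ⊗ₜ[K] x) + a₃ • ((1 : A) ⊗ₜ[K] (x * y)) +
        a₄ • ((y * x) ⊗ₜ[K] (1 : A))) :
    DJac K A D x x y + μ • otimes1 K A x (D (x ⊗ₜ[K] y)) =
      (a₁ * (μ - a₁)) • ((x ⊗ₜ[K] x) ⊗ₜ[K] y)
      + (-(a₁ * a₃)) • ((x ⊗ₜ[K] (1 : A)) ⊗ₜ[K] (x * y))
      + (a₂ * (a₂ + μ)) • ((y ⊗ₜ[K] x) ⊗ₜ[K] x)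
      + (a₂ * a₄) • (((y * x) ⊗ₜ[K] (1 : A)) ⊗ₜ[K] x)
      + (-(a₁ * a₃)) • (((1 : A) ⊗ₜ[K] (x * x)) ⊗ₜ[K] y)
      + (a₃ * (μ - a₃)) • (((1 : A) ⊗ₜ[K] x) ⊗ₜ[K] (x * y))
      + (a₂ * a₄) • ((y ⊗ₜ[K] (x * x)) ⊗ₜ[K] (1 : A))
      + (a₄ * (a₄ + μ)) • (((y * x) ⊗ₜ[K] x) ⊗ₜ[K] (1 : A)) := by
  have hxxy : D (x ⊗ₜ[K] (x * y)) = (x ⊗ₜ[K] (1 : A)) * D (x ⊗ₜ[K] y) := by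
    simpa [hxx] using hL.1 x x y
  have hxyx : D (x ⊗ₜ[K] (y * x)) = D (x ⊗ₜ[K] y) * ((1 : A) ⊗ₜ[K] x) := by
    simpa [hxx] using hL.1 x y x
  rw [DJac, hxx, hxy]
  simp only [dL, dR, dLfst, otimes1, swap23, LinearMap.coe_comp, Function.comp_apply,
    map_add, map_smul, LinearMap.map_zero, LinearMap.rTensor_tmul, LinearMap.lTensor_tmul,
    TensorProduct.mk_apply, LinearEquiv.coe_coe, sub_zero]
  rw [hxx, hL.apply_tmul_one_s13, hxy, hxxy, hxyx, hxy]
  simp only [Algebra.TensorProduct.tmul_mul_tmul, mul_add, add_mul, mul_smul_comm,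
    smul_mul_assoc, one_mul, mul_one, map_add, map_smul, TensorProduct.assoc_symm_tmul,
    smul_zero, tmul_zero, zero_tmul, mul_assoc, TensorProduct.tmul_add, TensorProduct.add_tmul,
    LinearMap.flip_apply, ← TensorProduct.smul_tmul', TensorProduct.tmul_smul,
    TensorProduct.mk_apply, map_zero]
  module

end Expansion

section FreeAlgebra

variable {K X : Type*} [Field K]

def DJacSelfEqns (μ a₁ a₂ a₃ a₄ : K) : Prop :=
  a₁ * (μ - a₁) = 0 ∧ a₁ * a₃ = 0 ∧ a₂ * (a₂ + μ) = 0 ∧ a₂ * a₄ = 0 ∧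
    a₃ * (μ - a₃) = 0 ∧ a₄ * (a₄ + μ) = 0

theorem DJac_ι_self_eq_iff {D : FreeAlgebra K X ⊗[K] FreeAlgebra K X →ₗ[K]
      FreeAlgebra K X ⊗[K] FreeAlgebra K X}
    (hL : LeibnizRules K (FreeAlgebra K X) D) {i j : X} (hij : i ≠ j) {a₁ a₂ a₃ a₄ : K} (μ : K)
    (hii : D (ι K i ⊗ₜ[K] ι K i) = 0)
    (hij' : D (ι K i ⊗ₜ[K] ι K j) =
      a₁ • (ι K i ⊗ₜ[K] ι K j) + a₂ • (ι K j ⊗ₜ[K] ι K i)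
      + a₃ • ((1 : FreeAlgebra K X) ⊗ₜ[K] (ι K i * ι K j))
      + a₄ • ((ι K j * ι K i) ⊗ₜ[K] (1 : FreeAlgebra K X))) :
    DJac K (FreeAlgebra K X) D (ι K i) (ι K i) (ι K j) =
        (-μ) • otimes1 K (FreeAlgebra K X) (ι K i) (D (ι K i ⊗ₜ[K] ι K j)) ↔
      DJacSelfEqns μ a₁ a₂ a₃ a₄ := by
  have hexp := DJac_self_add_smul_otimes1 hL μ hii hij'
  have hneg : (-μ) • otimes1 K (FreeAlgebra K X) (ι K i) (D (ι K i ⊗ₜ[K] ι K j)) =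
      -(μ • otimes1 K (FreeAlgebra K X) (ι K i) (D (ι K i ⊗ₜ[K] ι K j))) :=
    eq_neg_of_add_eq_zero_left (by rw [← add_smul, neg_add_cancel, zero_smul])
  rw [hneg, ← add_eq_zero_iff_eq_neg, hexp]
  constructor
  · intro h
    obtain ⟨h₁, h₂, h₃, h₄, -, h₆, -, h₈⟩ := eq_zero_of_monomial_combination_eq_zero hij h
    exact ⟨h₁, neg_eq_zero.mp h₂, h₃, h₄, h₆, h₈⟩
  · rintro ⟨h₁, h₂, h₃, h₄, h₅, h₆⟩
    simp [h₁, h₂, h₃, h₄, h₅, h₆]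

end FreeAlgebra

theorem djacSelfEqns_iff {K : Type*} [Field K] [CharZero K] (l r γ₁ γ₂ γ₃ γ₄ : K) :
    DJacSelfEqns l (-(γ₁ / 2)) (γ₂ / 2) (-(γ₃ / 2)) (γ₄ / 2) ∧
      DJacSelfEqns r ((l + r + γ₁) / 2) (-((l + r + γ₂) / 2)) (-((l - r + γ₄) / 2))
        ((l - r + γ₃) / 2) ↔
    ((r = -l ∧ ((γ₁ = 0 ∧ γ₂ = 0 ∧ γ₃ = -(2 * l) ∧ γ₄ = -(2 * l)) ∨
        (γ₁ = 0 ∧ γ₂ = 0 ∧ γ₃ = -(2 * l) ∧ γ₄ = 0) ∨ (γ₁ = 0 ∧ γ₂ = 0 ∧ γ₃ = 0 ∧ γ₄ = -(2 * l)) ∨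
        (γ₁ = 0 ∧ γ₂ = 0 ∧ γ₃ = 0 ∧ γ₄ = 0))) ∨
     (r = l ∧ ((γ₁ = -(2 * l) ∧ γ₂ = -(2 * l) ∧ γ₃ = 0 ∧ γ₄ = 0) ∨
        (γ₁ = -(2 * l) ∧ γ₂ = 0 ∧ γ₃ = 0 ∧ γ₄ = 0) ∨ (γ₁ = 0 ∧ γ₂ = -(2 * l) ∧ γ₃ = 0 ∧ γ₄ = 0) ∨
        (γ₁ = 0 ∧ γ₂ = 0 ∧ γ₃ = 0 ∧ γ₄ = 0))) ∨
     ((r = l ∨ r = -l) ∧ ((γ₁ = 0 ∧ γ₂ = -(2 * l) ∧ γ₃ = -(2 * l) ∧ γ₄ = 0) ∨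
        (γ₁ = -(2 * l) ∧ γ₂ = 0 ∧ γ₃ = 0 ∧ γ₄ = -(2 * l))))) := by
  unfold DJacSelfEqns
  constructor
  · rintro ⟨⟨e₁, e₁₃, e₂, e₂₄, e₃, e₄⟩, f₁, f₁₄, -, f₂₃, -, -⟩
    have root : ∀ γ : K, γ * (γ + 2 * l) = 0 → γ = 0 ∨ γ = -(2 * l) := fun γ h =>
      (mul_eq_zero.mp h).imp id eq_neg_of_add_eq_zero_left
    have h₁ := root γ₁ (by linear_combination (-4 : K) * e₁)
    have h₂ := root γ₂ (by linear_combination (4 : K) * e₂)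
    have h₃ := root γ₃ (by linear_combination (-4 : K) * e₃)
    have h₄ := root γ₄ (by linear_combination (4 : K) * e₄)
    have h₁₃ : γ₁ * γ₃ = 0 := by linear_combination (4 : K) * e₁₃
    have h₂₄ : γ₂ * γ₄ = 0 := by linear_combination (4 : K) * e₂₄
    have h₁₄ : (γ₁ + l + r) * (γ₄ + l - r) = 0 := by linear_combination (-4 : K) * f₁₄
    have h₂₃ : (γ₂ + l + r) * (γ₃ + l - r) = 0 := by linear_combination (-4 : K) * f₂₃
    -- `(γ₁ + l)² = l²` by `e₁` and `(γ₁ + l)² = r²` by `f₁`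
    have hr : r = l ∨ r = -l := by
      refine (mul_eq_zero.mp (?_ : (r - l) * (r + l) = 0)).imp sub_eq_zero.mp
        eq_neg_of_add_eq_zero_left
      linear_combination (4 : K) * f₁ - (4 : K) * e₁
    rcases eq_or_ne l 0 with rfl | hl
    · simp_all
    rcases hr with rfl | rfl <;> rcases h₁ with rfl | rfl <;> rcases h₂ with rfl | rfl <;>
      rcases h₃ with rfl | rfl <;> rcases h₄ with rfl | rfl <;>
      ring_nf at h₁₃ h₂₄ h₁₄ h₂₃ ⊢ <;> simp_all
  · rintro (⟨rfl, ⟨rfl, rfl, rfl, rfl⟩ | ⟨rfl, rfl, rfl, rfl⟩ | ⟨rfl, rfl, rfl, rfl⟩ |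
        ⟨rfl, rfl, rfl, rfl⟩⟩ |
      ⟨rfl, ⟨rfl, rfl, rfl, rfl⟩ | ⟨rfl, rfl, rfl, rfl⟩ | ⟨rfl, rfl, rfl, rfl⟩ |
        ⟨rfl, rfl, rfl, rfl⟩⟩ |
      ⟨rfl | rfl, ⟨rfl, rfl, rfl, rfl⟩ | ⟨rfl, rfl, rfl, rfl⟩⟩) <;>
    refine ⟨⟨?_, ?_, ?_, ?_, ?_, ?_⟩, ?_, ?_, ?_, ?_, ?_, ?_⟩ <;> ring

theorem stmt13_general {K : Type*} [Field K] [CharZero K]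
    (lam ρ γ1 γ2 γ3 γ4 : K)
    (D : FreeAlgebra K (Fin 2) ⊗[K] FreeAlgebra K (Fin 2) →ₗ[K] FreeAlgebra K (Fin 2) ⊗[K] FreeAlgebra K (Fin 2))
    (hL : LeibnizRules K (FreeAlgebra K (Fin 2)) D)
    (hvv : D (FreeAlgebra.ι K (0 : Fin 2) ⊗ₜ[K] FreeAlgebra.ι K (0 : Fin 2)) = 0)
    (hww : D (FreeAlgebra.ι K (1 : Fin 2) ⊗ₜ[K] FreeAlgebra.ι K (1 : Fin 2)) = 0)
    (hvw : D (FreeAlgebra.ι K (0 : Fin 2) ⊗ₜ[K] FreeAlgebra.ι K (1 : Fin 2)) =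
      (-(γ1 / 2)) • (FreeAlgebra.ι K (0 : Fin 2) ⊗ₜ[K] FreeAlgebra.ι K (1 : Fin 2)) + (γ2 / 2) • (FreeAlgebra.ι K (1 : Fin 2) ⊗ₜ[K] FreeAlgebra.ι K (0 : Fin 2)) +
      (-(γ3 / 2)) • ((1 : FreeAlgebra K (Fin 2)) ⊗ₜ[K] (FreeAlgebra.ι K (0 : Fin 2) * FreeAlgebra.ι K (1 : Fin 2))) +
      (γ4 / 2) • ((FreeAlgebra.ι K (1 : Fin 2) * FreeAlgebra.ι K (0 : Fin 2)) ⊗ₜ[K] (1 : FreeAlgebra K (Fin 2))))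
    (hwv : D (FreeAlgebra.ι K (1 : Fin 2) ⊗ₜ[K] FreeAlgebra.ι K (0 : Fin 2)) =
      (-((lam + ρ + γ2) / 2)) • (FreeAlgebra.ι K (0 : Fin 2) ⊗ₜ[K] FreeAlgebra.ι K (1 : Fin 2)) +
      ((lam + ρ + γ1) / 2) • (FreeAlgebra.ι K (1 : Fin 2) ⊗ₜ[K] FreeAlgebra.ι K (0 : Fin 2)) +
      (-((lam - ρ + γ4) / 2)) • ((1 : FreeAlgebra K (Fin 2)) ⊗ₜ[K] (FreeAlgebra.ι K (1 : Fin 2) * FreeAlgebra.ι K (0 : Fin 2))) +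
      ((lam - ρ + γ3) / 2) • ((FreeAlgebra.ι K (0 : Fin 2) * FreeAlgebra.ι K (1 : Fin 2)) ⊗ₜ[K] (1 : FreeAlgebra K (Fin 2)))) :
    (DJac K (FreeAlgebra K (Fin 2)) D (FreeAlgebra.ι K (0 : Fin 2)) (FreeAlgebra.ι K (0 : Fin 2)) (FreeAlgebra.ι K (1 : Fin 2)) =
        (-lam) • otimes1 K (FreeAlgebra K (Fin 2)) (FreeAlgebra.ι K (0 : Fin 2)) (D (FreeAlgebra.ι K (0 : Fin 2) ⊗ₜ[K] FreeAlgebra.ι K (1 : Fin 2))) ∧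
      DJac K (FreeAlgebra K (Fin 2)) D (FreeAlgebra.ι K (1 : Fin 2)) (FreeAlgebra.ι K (1 : Fin 2)) (FreeAlgebra.ι K (0 : Fin 2)) =
        (-ρ) • otimes1 K (FreeAlgebra K (Fin 2)) (FreeAlgebra.ι K (1 : Fin 2)) (D (FreeAlgebra.ι K (1 : Fin 2) ⊗ₜ[K] FreeAlgebra.ι K (0 : Fin 2)))) ↔
    ((ρ = -lam ∧ ((γ1 = 0 ∧ γ2 = 0 ∧ γ3 = -(2 * lam) ∧ γ4 = -(2 * lam)) ∨ (γ1 = 0 ∧ γ2 = 0 ∧ γ3 = -(2 * lam) ∧ γ4 = 0) ∨ (γ1 = 0 ∧ γ2 = 0 ∧ γ3 = 0 ∧ γ4 = -(2 * lam)) ∨ (γ1 = 0 ∧ γ2 = 0 ∧ γ3 = 0 ∧ γ4 = 0))) ∨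
     (ρ = lam ∧ ((γ1 = -(2 * lam) ∧ γ2 = -(2 * lam) ∧ γ3 = 0 ∧ γ4 = 0) ∨ (γ1 = -(2 * lam) ∧ γ2 = 0 ∧ γ3 = 0 ∧ γ4 = 0) ∨ (γ1 = 0 ∧ γ2 = -(2 * lam) ∧ γ3 = 0 ∧ γ4 = 0) ∨ (γ1 = 0 ∧ γ2 = 0 ∧ γ3 = 0 ∧ γ4 = 0))) ∨
     ((ρ = lam ∨ ρ = -lam) ∧ ((γ1 = 0 ∧ γ2 = -(2 * lam) ∧ γ3 = -(2 * lam) ∧ γ4 = 0) ∨ (γ1 = -(2 * lam) ∧ γ2 = 0 ∧ γ3 = 0 ∧ γ4 = -(2 * lam))))) := by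
  have hwv' : D (ι K (1 : Fin 2) ⊗ₜ[K] ι K 0) =
      ((lam + ρ + γ1) / 2) • (ι K 1 ⊗ₜ[K] ι K 0) + (-((lam + ρ + γ2) / 2)) • (ι K 0 ⊗ₜ[K] ι K 1) +
      (-((lam - ρ + γ4) / 2)) • (1 ⊗ₜ[K] (ι K 1 * ι K 0)) +
      ((lam - ρ + γ3) / 2) • ((ι K 0 * ι K 1) ⊗ₜ[K] 1) := by
    rw [hwv]; module
  rw [DJac_ι_self_eq_iff hL zero_ne_one lam hvv hvw, DJac_ι_self_eq_iff hL one_ne_zero ρ hww hwv']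
  exact djacSelfEqns_iff lam ρ γ1 γ2 γ3 γ4

theorem stmt13 {K : Type*} [Field K] [IsAlgClosed K] [CharZero K]
    (lam ρ γ1 γ2 γ3 γ4 : K)
    (D : FreeAlgebra K (Fin 2) ⊗[K] FreeAlgebra K (Fin 2) →ₗ[K] FreeAlgebra K (Fin 2) ⊗[K] FreeAlgebra K (Fin 2)) (hD0 : D ≠ 0)
    (hL : LeibnizRules K (FreeAlgebra K (Fin 2)) D)
    (hvv : D (FreeAlgebra.ι K (0 : Fin 2) ⊗ₜ[K] FreeAlgebra.ι K (0 : Fin 2)) = 0)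
    (hww : D (FreeAlgebra.ι K (1 : Fin 2) ⊗ₜ[K] FreeAlgebra.ι K (1 : Fin 2)) = 0)
    (hvw : D (FreeAlgebra.ι K (0 : Fin 2) ⊗ₜ[K] FreeAlgebra.ι K (1 : Fin 2)) =
      (-(γ1 / 2)) • (FreeAlgebra.ι K (0 : Fin 2) ⊗ₜ[K] FreeAlgebra.ι K (1 : Fin 2)) + (γ2 / 2) • (FreeAlgebra.ι K (1 : Fin 2) ⊗ₜ[K] FreeAlgebra.ι K (0 : Fin 2)) +
      (-(γ3 / 2)) • ((1 : FreeAlgebra K (Fin 2)) ⊗ₜ[K] (FreeAlgebra.ι K (0 : Fin 2) * FreeAlgebra.ι K (1 : Fin 2))) +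
      (γ4 / 2) • ((FreeAlgebra.ι K (1 : Fin 2) * FreeAlgebra.ι K (0 : Fin 2)) ⊗ₜ[K] (1 : FreeAlgebra K (Fin 2))))
    (hwv : D (FreeAlgebra.ι K (1 : Fin 2) ⊗ₜ[K] FreeAlgebra.ι K (0 : Fin 2)) =
      (-((lam + ρ + γ2) / 2)) • (FreeAlgebra.ι K (0 : Fin 2) ⊗ₜ[K] FreeAlgebra.ι K (1 : Fin 2)) +
      ((lam + ρ + γ1) / 2) • (FreeAlgebra.ι K (1 : Fin 2) ⊗ₜ[K] FreeAlgebra.ι K (0 : Fin 2)) +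
      (-((lam - ρ + γ4) / 2)) • ((1 : FreeAlgebra K (Fin 2)) ⊗ₜ[K] (FreeAlgebra.ι K (1 : Fin 2) * FreeAlgebra.ι K (0 : Fin 2))) +
      ((lam - ρ + γ3) / 2) • ((FreeAlgebra.ι K (0 : Fin 2) * FreeAlgebra.ι K (1 : Fin 2)) ⊗ₜ[K] (1 : FreeAlgebra K (Fin 2)))) :
    (DJac K (FreeAlgebra K (Fin 2)) D (FreeAlgebra.ι K (0 : Fin 2)) (FreeAlgebra.ι K (0 : Fin 2)) (FreeAlgebra.ι K (1 : Fin 2)) =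
        (-lam) • otimes1 K (FreeAlgebra K (Fin 2)) (FreeAlgebra.ι K (0 : Fin 2)) (D (FreeAlgebra.ι K (0 : Fin 2) ⊗ₜ[K] FreeAlgebra.ι K (1 : Fin 2))) ∧
      DJac K (FreeAlgebra K (Fin 2)) D (FreeAlgebra.ι K (1 : Fin 2)) (FreeAlgebra.ι K (1 : Fin 2)) (FreeAlgebra.ι K (0 : Fin 2)) =
        (-ρ) • otimes1 K (FreeAlgebra K (Fin 2)) (FreeAlgebra.ι K (1 : Fin 2)) (D (FreeAlgebra.ι K (1 : Fin 2) ⊗ₜ[K] FreeAlgebra.ι K (0 : Fin 2)))) ↔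
    ((ρ = -lam ∧ ((γ1 = 0 ∧ γ2 = 0 ∧ γ3 = -(2 * lam) ∧ γ4 = -(2 * lam)) ∨ (γ1 = 0 ∧ γ2 = 0 ∧ γ3 = -(2 * lam) ∧ γ4 = 0) ∨ (γ1 = 0 ∧ γ2 = 0 ∧ γ3 = 0 ∧ γ4 = -(2 * lam)) ∨ (γ1 = 0 ∧ γ2 = 0 ∧ γ3 = 0 ∧ γ4 = 0))) ∨
     (ρ = lam ∧ ((γ1 = -(2 * lam) ∧ γ2 = -(2 * lam) ∧ γ3 = 0 ∧ γ4 = 0) ∨ (γ1 = -(2 * lam) ∧ γ2 = 0 ∧ γ3 = 0 ∧ γ4 = 0) ∨ (γ1 = 0 ∧ γ2 = -(2 * lam) ∧ γ3 = 0 ∧ γ4 = 0) ∨ (γ1 = 0 ∧ γ2 = 0 ∧ γ3 = 0 ∧ γ4 = 0))) ∨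
     ((ρ = lam ∨ ρ = -lam) ∧ ((γ1 = 0 ∧ γ2 = -(2 * lam) ∧ γ3 = -(2 * lam) ∧ γ4 = 0) ∨ (γ1 = -(2 * lam) ∧ γ2 = 0 ∧ γ3 = 0 ∧ γ4 = -(2 * lam))))) :=
  stmt13_general lam ρ γ1 γ2 γ3 γ4 D hL hvv hww hvw hwv
end

section
/- Let K be an algebraically closed field of characteristic zero and A = K⟨v1,v2,v3⟩ the free associative K-algebra. Let α̃1, α̃2, α̃3, β̃1, β̃2, β̃3 ∈ {0,1} ⊆ K satisfy α̃1α̃2 + α̃2α̃3 − α̃1α̃3 − α̃2 = 0 and β̃1β̃2 + β̃2β̃3 − β̃1β̃3 − β̃2 = 0. Then every K-linear map ⟪-,-⟫ : A⊗A → A⊗A satisfying the Leibniz rules with ⟪v_i,v_i⟫ = 0 for i = 1,2,3, ⟪v1,v2⟫ = α̃3·(v1⊗v2) − β̃3·(v2⊗v1), ⟪v2,v1⟫ = (−1+β̃3)·(v1⊗v2) + (1−α̃3)·(v2⊗v1), ⟪v1,v3⟫ = α̃2·(v1⊗v3) − β̃2·(v3⊗v1), ⟪v3,v1⟫ = (−1+β̃2)·(v1⊗v3)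 + (1−α̃2)·(v3⊗v1), ⟪v2,v3⟫ = α̃1·(v2⊗v3) − β̃1·(v3⊗v2), ⟪v3,v2⟫ = (−1+β̃1)·(v2⊗v3) + (1−α̃1)·(v3⊗v2), is a mixed double Poisson algebra structure on A of weight (1,1,1). -/
open TensorProduct

private lemma finmk0 (h : 0 < 3) : (⟨0, h⟩ : Fin 3) = 0 := rfl
private lemma finmk1 (h : 1 < 3) : (⟨1, h⟩ : Fin 3) = 1 := rfl
private lemma finmk2 (h : 2 < 3) : (⟨2, h⟩ : Fin 3) = 2 := rfl

set_option maxHeartbeats 4000000 in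
set_option synthInstance.maxHeartbeats 1000000 in
theorem stmt14 {K : Type*} [Field K] [IsAlgClosed K] [CharZero K]
    (a1 a2 a3 b1 b2 b3 : K)
    (ha1 : a1 = 0 ∨ a1 = 1)
    (ha2 : a2 = 0 ∨ a2 = 1)
    (ha3 : a3 = 0 ∨ a3 = 1)
    (hb1 : b1 = 0 ∨ b1 = 1)
    (hb2 : b2 = 0 ∨ b2 = 1)
    (hb3 : b3 = 0 ∨ b3 = 1)
    (hacond : a1 * a2 + a2 * a3 - a1 * a3 - a2 = 0)
    (hbcond : b1 * b2 + b2 * b3 - b1 * b3 - b2 = 0)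
    (D : FreeAlgebra K (Fin 3) ⊗[K] FreeAlgebra K (Fin 3) →ₗ[K] FreeAlgebra K (Fin 3) ⊗[K] FreeAlgebra K (Fin 3))
    (hL : LeibnizRules K (FreeAlgebra K (Fin 3)) D)
    (h11 : D (FreeAlgebra.ι K (0 : Fin 3) ⊗ₜ[K] FreeAlgebra.ι K (0 : Fin 3)) = 0)
    (h22 : D (FreeAlgebra.ι K (1 : Fin 3) ⊗ₜ[K] FreeAlgebra.ι K (1 : Fin 3)) = 0)
    (h33 : D (FreeAlgebra.ι K (2 : Fin 3) ⊗ₜ[K] FreeAlgebra.ι K (2 : Fin 3)) = 0)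
    (h12 : D (FreeAlgebra.ι K (0 : Fin 3) ⊗ₜ[K] FreeAlgebra.ι K (1 : Fin 3)) =
      a3 • (FreeAlgebra.ι K (0 : Fin 3) ⊗ₜ[K] FreeAlgebra.ι K (1 : Fin 3)) - b3 • (FreeAlgebra.ι K (1 : Fin 3) ⊗ₜ[K] FreeAlgebra.ι K (0 : Fin 3)))
    (h21 : D (FreeAlgebra.ι K (1 : Fin 3) ⊗ₜ[K] FreeAlgebra.ι K (0 : Fin 3)) =
      (-1 + b3) • (FreeAlgebra.ι K (0 : Fin 3) ⊗ₜ[K] FreeAlgebra.ι K (1 : Fin 3)) + (1 - a3) • (FreeAlgebra.ι K (1 : Fin 3) ⊗ₜ[K] FreeAlgebra.ι K (0 : Fin 3)))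
    (h13 : D (FreeAlgebra.ι K (0 : Fin 3) ⊗ₜ[K] FreeAlgebra.ι K (2 : Fin 3)) =
      a2 • (FreeAlgebra.ι K (0 : Fin 3) ⊗ₜ[K] FreeAlgebra.ι K (2 : Fin 3)) - b2 • (FreeAlgebra.ι K (2 : Fin 3) ⊗ₜ[K] FreeAlgebra.ι K (0 : Fin 3)))
    (h31 : D (FreeAlgebra.ι K (2 : Fin 3) ⊗ₜ[K] FreeAlgebra.ι K (0 : Fin 3)) =
      (-1 + b2) • (FreeAlgebra.ι K (0 : Fin 3) ⊗ₜ[K] FreeAlgebra.ι K (2 : Fin 3)) + (1 - a2) • (FreeAlgebra.ι K (2 : Fin 3) ⊗ₜ[K] FreeAlgebra.ι K (0 : Fin 3)))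
    (h23 : D (FreeAlgebra.ι K (1 : Fin 3) ⊗ₜ[K] FreeAlgebra.ι K (2 : Fin 3)) =
      a1 • (FreeAlgebra.ι K (1 : Fin 3) ⊗ₜ[K] FreeAlgebra.ι K (2 : Fin 3)) - b1 • (FreeAlgebra.ι K (2 : Fin 3) ⊗ₜ[K] FreeAlgebra.ι K (1 : Fin 3)))
    (h32 : D (FreeAlgebra.ι K (2 : Fin 3) ⊗ₜ[K] FreeAlgebra.ι K (1 : Fin 3)) =
      (-1 + b1) • (FreeAlgebra.ι K (1 : Fin 3) ⊗ₜ[K] FreeAlgebra.ι K (2 : Fin 3)) + (1 - a1) • (FreeAlgebra.ι K (2 : Fin 3) ⊗ₜ[K] FreeAlgebra.ι K (1 : Fin 3))) :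
    IsMixedDoublePoisson K (FreeAlgebra K (Fin 3)) (FreeAlgebra.ι K) (fun _ : Fin 3 => (1 : K)) D := by
  have sa1 : a1 * a1 = a1 := by rcases ha1 with h | h <;> rw [h] <;> ring
  have sa2 : a2 * a2 = a2 := by rcases ha2 with h | h <;> rw [h] <;> ring
  have sa3 : a3 * a3 = a3 := by rcases ha3 with h | h <;> rw [h] <;> ring
  have sb1 : b1 * b1 = b1 := by rcases hb1 with h | h <;> rw [h] <;> ring
  have sb2 : b2 * b2 = b2 := by rcases hb2 with h | h <;> rw [h] <;> ring
  have sb3 : b3 * b3 = b3 := by rcases hb3 with h | h <;> rw [h] <;> ring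
  refine ⟨⟨hL, ?_⟩, ?_⟩
  · intro i j
    fin_cases i <;> fin_cases j <;>
      simp only [finmk0, finmk1, finmk2, Fin.isValue, flipT, LinearEquiv.coe_coe, h11, h22, h33, h12, h21, h13, h31,
        h23, h32, map_add, map_sub, map_smul, map_zero, TensorProduct.comm_tmul] <;>
      match_scalars <;> ring1
  · intro i j k
    fin_cases i <;> fin_cases j <;> fin_cases k <;>
    · simp only [finmk0, finmk1, finmk2, Fin.isValue, DJac, dL, dR, dLfst, swap23, otimes1, LinearMap.coe_comp,
        Function.comp_apply, LinearEquiv.coe_coe, h11, h22, h33, h12, h21, h13, h31, h23, h32,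
        map_add, map_sub, map_smul, map_zero, map_neg, neg_zero, zero_sub, sub_zero, zero_add,
        add_zero, smul_zero, LinearMap.rTensor_tmul, LinearMap.lTensor_tmul,
        TensorProduct.mk_apply, LinearMap.flip_apply, TensorProduct.assoc_tmul,
        TensorProduct.assoc_symm_tmul, TensorProduct.comm_tmul, TensorProduct.tmul_add,
        TensorProduct.tmul_sub, TensorProduct.tmul_smul, TensorProduct.add_tmul,
        TensorProduct.sub_tmul, TensorProduct.tmul_zero, TensorProduct.zero_tmul,
        ← TensorProduct.smul_tmul']
      match_scalars <;>
        first
          | ring1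
          | linear_combination hacond
          | linear_combination -hacond
          | linear_combination hbcond
          | linear_combination -hbcond
          | linear_combination sa1
          | linear_combination -sa1
          | linear_combination sa2
          | linear_combination -sa2
          | linear_combination sa3
          | linear_combination -sa3
          | linear_combination sb1
          | linear_combination -sb1
          | linear_combination sb2
          | linear_combination -sb2
          | linear_combination sb3
          | linear_combination -sb3
end
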